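/- arXiv:0812.3056 — 11 statements merged into one kernel-verified Lean document; each statement's English description precedes it below -/
import Mathlib

section
/- For every field K of characteristic zero, every q ∈ K, every n ≥ 1, and all integers k, l ≥ 1, the q-Steenrod operators satisfy the commutation relation P_k ∘ P_l − P_l ∘ P_k = q·(l − k)·P_{k+l} as K-linear endomorphisms of the polynomial ring K[x_1,…,x_n]. -/
open MvPolynomial

/-- The `q`-Steenrod operator `P_k` on `K[x_1,…,x_n]`:
`P_k(p) = ∑ i, x_i^k • (p + q • x_i • ∂p/∂x_i)`. -/
noncomputable def steenrodP (K : Type) [Field K] (q : K) (n k : ℕ) :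
    Module.End K (MvPolynomial (Fin n) K) :=
  ∑ i : Fin n, (LinearMap.mulLeft K (X i ^ k : MvPolynomial (Fin n) K)) ∘ₗ
    (LinearMap.id + q • ((LinearMap.mulLeft K (X i : MvPolynomial (Fin n) K)) ∘ₗ
      (pderiv i).toLinearMap))

/-- The dual `q`-Steenrod operator `P_k^*` on `K[x_1,…,x_n]`:
`P_k^*(p) = ∑ i, (∂^k p/∂x_i^k + q • x_i • ∂^{k+1} p/∂x_i^{k+1})`. -/
noncomputable def steenrodPdual (K : Type) [Field K] (q : K) (n k : ℕ) :
    Module.End K (MvPolynomial (Fin n) K) :=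
  ∑ i : Fin n,
    ((((pderiv i).toLinearMap : Module.End K (MvPolynomial (Fin n) K)) ^ k)
      + q • ((LinearMap.mulLeft K (X i : MvPolynomial (Fin n) K)) ∘ₗ
          ((((pderiv i).toLinearMap : Module.End K (MvPolynomial (Fin n) K)) ^ (k+1) : Module.End K (MvPolynomial (Fin n) K)) : MvPolynomial (Fin n) K →ₗ[K] MvPolynomial (Fin n) K)))

/-- The bilinear form `B(p,r) = ∑_m m! ⬝ p_m ⬝ r_m` over exponent vectors `m`. -/
noncomputable def formB {K : Type} [Field K] {n : ℕ} (p r : MvPolynomial (Fin n) K) : K :=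
  ∑ m ∈ p.support, (∏ i, ((m i).factorial : K)) * p.coeff m * r.coeff m

/-- `p` is `q`-harmonic if it is killed by all the dual `q`-Steenrod operators. -/
def IsQHarmonic {K : Type} [Field K] {n : ℕ} (q : K) (p : MvPolynomial (Fin n) K) : Prop :=
  ∀ k : ℕ, 1 ≤ k → steenrodPdual K q n k p = 0

/-- The space of `q`-hit polynomials: the span of the ranges of the `P_k`, `k ≥ 1`. -/
noncomputable def qHit (K : Type) [Field K] (q : K) (n : ℕ) :
    Submodule K (MvPolynomial (Fin n) K) :=
  Submodule.span K (⋃ k ∈ {k : ℕ | 1 ≤ k}, Set.range (steenrodP K q n k))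

/-- For a list `λ = [λ_1, …, λ_m]`, the operator `P_λ = P_{λ_1} ∘ ⋯ ∘ P_{λ_m}`. -/
noncomputable def steenrodPList (K : Type) [Field K] (q : K) (n : ℕ) (l : List ℕ) :
    Module.End K (MvPolynomial (Fin n) K) :=
  (l.map (steenrodP K q n)).prod
open MvPolynomial

section Key
variable {K : Type} [Field K] {R : Type} [Ring R] [Algebra K R]

private lemma keyA (M D : R) (h : D * M = M * D + 1) :
    ∀ m : ℕ, D * M ^ (m + 1) = M ^ (m + 1) * D + (((m + 1 : ℕ) : K)) • M ^ m := by
  intro m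
  induction m with
  | zero => simpa using h
  | succ m ih =>
      have e : D * M ^ (m + 2) = (D * M ^ (m + 1)) * M := by
        rw [mul_assoc, ← pow_succ]
      rw [e, ih, add_mul, smul_mul_assoc, mul_assoc, h, mul_add, mul_one, ← pow_succ,
        ← mul_assoc, ← pow_succ]
      push_cast
      match_scalars <;> ring

private lemma keyProd (M D : R) (h : D * M = M * D + 1) (q : K) (a b : ℕ) :
    (M ^ (a + 1) + q • (M ^ (a + 2) * D)) * (M ^ (b + 1) + q • (M ^ (b + 2) * D))
      = (1 + q * ((b + 1 : ℕ) : K)) • M ^ (a + b + 2)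
        + (2 * q + q * q * ((b + 2 : ℕ) : K)) • (M ^ (a + b + 3) * D)
        + (q * q) • (M ^ (a + b + 4) * (D * D)) := by
  have e1 : D * M ^ (b + 1) = M ^ (b + 1) * D + ((b + 1 : ℕ) : K) • M ^ b :=
    keyA (K := K) M D h b
  have e2 : D * M ^ (b + 2) = M ^ (b + 2) * D + ((b + 2 : ℕ) : K) • M ^ (b + 1) :=
    keyA (K := K) M D h (b + 1)
  have e2x : ∀ x : R, D * (M ^ (b + 2) * x)
      = M ^ (b + 2) * (D * x) + ((b + 2 : ℕ) : K) • (M ^ (b + 1) * x) := by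
    intro x; rw [← mul_assoc, e2, add_mul, smul_mul_assoc, mul_assoc]
  have hm : ∀ (s t : ℕ) (x : R), M ^ s * (M ^ t * x) = M ^ (s + t) * x := by
    intro s t x; rw [← mul_assoc, ← pow_add]
  have hm2 : ∀ (s t : ℕ), M ^ s * M ^ t = M ^ (s + t) := fun s t => (pow_add M s t).symm
  simp only [add_mul, mul_add, smul_mul_assoc, mul_smul_comm, smul_smul, mul_assoc]
  simp only [e1, e2x, mul_add, mul_smul_comm, mul_assoc, smul_smul]
  simp only [hm, hm2]
  simp only [show a + 1 + (b + 1) = a + b + 2 by omega, show a + 1 + (b + 2) = a + b + 3 by omega,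
    show a + 2 + (b + 1) = a + b + 3 by omega, show a + 2 + b = a + b + 2 by omega,
    show a + 2 + (b + 2) = a + b + 4 by omega]
  push_cast
  match_scalars <;> ring

private lemma keyComm (M D : R) (h : D * M = M * D + 1) (q : K) (k l : ℕ)
    (hk : 1 ≤ k) (hl : 1 ≤ l) :
    (M ^ k + q • (M ^ (k+1) * D)) * (M ^ l + q • (M ^ (l+1) * D))
      - (M ^ l + q • (M ^ (l+1) * D)) * (M ^ k + q • (M ^ (k+1) * D))
      = (q * ((l : K) - (k : K))) • (M ^ (k + l) + q • (M ^ (k + l + 1) * D)) := by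
  obtain ⟨a, rfl⟩ : ∃ a, k = a + 1 := ⟨k - 1, by omega⟩
  obtain ⟨b, rfl⟩ : ∃ b, l = b + 1 := ⟨l - 1, by omega⟩
  rw [show a + 1 + 1 = a + 2 from rfl, show b + 1 + 1 = b + 2 from rfl,
    keyProd M D h q a b, keyProd M D h q b a,
    show b + a + 2 = a + b + 2 from by omega, show b + a + 3 = a + b + 3 from by omega,
    show b + a + 4 = a + b + 4 from by omega,
    show a + 1 + (b + 1) = a + b + 2 from by omega,
    show a + b + 2 + 1 = a + b + 3 from rfl]
  push_cast
  match_scalars <;> ring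

end Key

section MvP
variable {K : Type} [Field K] {n : ℕ}

private noncomputable def Mop (K : Type) [Field K] (n : ℕ) (i : Fin n) :
    Module.End K (MvPolynomial (Fin n) K) := LinearMap.mulLeft K (X i)

private noncomputable def Dop (K : Type) [Field K] (n : ℕ) (i : Fin n) :
    Module.End K (MvPolynomial (Fin n) K) := (pderiv i).toLinearMap

private lemma DM_self (i : Fin n) : Dop K n i * Mop K n i = Mop K n i * Dop K n i + 1 := by
  ext p
  simp [Mop, Dop, pderiv_mul, Module.End.mul_apply, add_comm]

private lemma DM_ne {i j : Fin n} (h : i ≠ j) :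
    Commute (Dop K n i) (Mop K n j) := by
  show _ = _
  ext p
  simp [Mop, Dop, pderiv_mul, pderiv_X_of_ne h.symm, Module.End.mul_apply]

private lemma MM (i j : Fin n) : Commute (Mop K n i) (Mop K n j) := by
  show _ = _
  ext p
  simp [Mop, Module.End.mul_apply, mul_left_comm]

private lemma DD (i j : Fin n) : Commute (Dop K n i) (Dop K n j) := by
  show _ = _
  refine LinearMap.ext fun p => ?_
  show pderiv i (pderiv j p) = pderiv j (pderiv i p)
  induction p using MvPolynomial.induction_on with
  | C a => simp
  | add p q hp hq => simp [hp, hq]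
  | mul_X p m hp =>
      simp [pderiv_mul, pderiv_X, hp, Pi.single_apply]
      split_ifs <;> (try simp only [map_zero]) <;> ring

private lemma steenrodP_eq (q : K) (k : ℕ) :
    steenrodP K q n k
      = ∑ i : Fin n, (Mop K n i ^ k + q • (Mop K n i ^ (k + 1) * Dop K n i)) := by
  unfold steenrodP
  refine Finset.sum_congr rfl fun i _ => ?_
  rw [← LinearMap.pow_mulLeft]
  show (Mop K n i ^ k) * (1 + q • (Mop K n i * Dop K n i)) = _
  rw [mul_add, mul_one, mul_smul_comm, ← mul_assoc, ← pow_succ]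


private lemma Tcomm (q : K) {i j : Fin n} (h : i ≠ j) (k l : ℕ) :
    Commute (Mop K n i ^ k + q • (Mop K n i ^ (k + 1) * Dop K n i))
      (Mop K n j ^ l + q • (Mop K n j ^ (l + 1) * Dop K n j)) := by
  have hMM : Commute (Mop K n i) (Mop K n j) := MM i j
  have hMD : Commute (Mop K n i) (Dop K n j) := (DM_ne h.symm).symm
  have hDM : Commute (Dop K n i) (Mop K n j) := DM_ne h
  have hDD : Commute (Dop K n i) (Dop K n j) := DD i j
  have c1 : Commute (Mop K n i ^ (k+1) * Dop K n i) (Mop K n j ^ (l+1) * Dop K n j) :=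
    ((hMM.pow_pow _ _).mul_right (hMD.pow_left _)).mul_left
      ((hDM.pow_right _).mul_right hDD)
  have c2 : Commute (Mop K n i ^ k) (Mop K n j ^ (l+1) * Dop K n j) :=
    (hMM.pow_pow _ _).mul_right (hMD.pow_left _)
  have c3 : Commute (Mop K n i ^ (k+1) * Dop K n i) (Mop K n j ^ l) :=
    (hMM.pow_pow _ _).mul_left (hDM.pow_right _)
  exact Commute.add_right
    (Commute.add_left (hMM.pow_pow k l) (c3.smul_left q))
    (Commute.add_left (c2.smul_right q) ((c1.smul_left q).smul_right q))

set_option linter.unusedVariables false in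
/-- The `q`-Steenrod operators satisfy the commutation relation
`P_k ∘ P_l − P_l ∘ P_k = q (l − k) P_{k+l}` on `K[x_1,…,x_n]`. -/
theorem steenrodP_commutator (K : Type) [Field K] [CharZero K] (q : K)
    (n : ℕ) (hn : 1 ≤ n) (k l : ℕ) (hk : 1 ≤ k) (hl : 1 ≤ l) :
    steenrodP K q n k * steenrodP K q n l - steenrodP K q n l * steenrodP K q n k
      = (q * ((l : K) - (k : K))) • steenrodP K q n (k + l) := by
  rw [steenrodP_eq q k, steenrodP_eq q l, steenrodP_eq q (k + l), Finset.smul_sum,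
    Finset.sum_mul_sum, Finset.sum_mul_sum, Finset.sum_comm, ← Finset.sum_sub_distrib]
  refine Finset.sum_congr rfl fun i _ => ?_
  rw [← Finset.sum_sub_distrib]
  rw [Finset.sum_eq_single i ?_ (by simp)]
  · exact keyComm _ _ (DM_self i) q k l hk hl
  · intro j _ hji
    exact sub_eq_zero_of_eq (Tcomm q hji k l).eq

end MvP
end

section
/- For every field K of characteristic zero, every q ∈ K, and every n ≥ 1, the set {f(1) : f belongs to the unital K-subalgebra of endomorphisms of K[x_1,…,x_n] generated by the operators P_k, k ≥ 1} is exactly the set of symmetric polynomials in K[x_1,…,x_n]. In particular, every symmetric polynomial with zero constant term is q-hit. -/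
open MvPolynomial

/-!
Write `P_k p = psum k * p + q • D_k p`, where `D_k = ∑ i, X i ^ (k + 1) ∂ᵢ` is a derivation with
`D_k (psum j) = j • psum (j + k)`. Then `D_k` preserves the span of products of `m` power sums, and
on it multiplication by `psum k` is `P_k - q • D_k`. By induction on `m`, every subspace that
contains `1` and is stable under all `P_k` contains all products of power sums, hence (Newton's
identities, characteristic zero) all symmetric polynomials. Both `{f 1}` and `qHit + K ∙ 1` are such
subspaces. Conversely the `P_k` preserve symmetry, and `qHit` has no constant terms.
-/

open scoped Pointwise in
theorem Submonoid.exists_mem_pow_of_mem_closure {M : Type*} [Monoid M] {s : Set M} {x : M}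
    (hx : x ∈ Submonoid.closure s) : ∃ m : ℕ, x ∈ s ^ m := by
  induction hx using Submonoid.closure_induction_left with
  | one => exact ⟨0, by simp⟩
  | mul_left a ha b _ ih =>
    obtain ⟨m, hm⟩ := ih
    exact ⟨m + 1, by rw [pow_succ']; exact Set.mul_mem_mul ha hm⟩

theorem Algebra.adjoin_le_of_span_pow_le {R A : Type*} [CommSemiring R] [Semiring A] [Algebra R A]
    {s : Set A} {W : Submodule R A} (h : ∀ m : ℕ, Submodule.span R s ^ m ≤ W) :
    Subalgebra.toSubmodule (Algebra.adjoin R s) ≤ W := by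
  rw [Algebra.adjoin_eq_span, Submodule.span_le]
  intro x hx
  obtain ⟨m, hm⟩ := Submonoid.exists_mem_pow_of_mem_closure hx
  exact h m (by rw [Submodule.span_pow]; exact Submodule.subset_span hm)

theorem Derivation.mapsTo_pow {R A : Type*} [CommSemiring R] [CommSemiring A] [Algebra R A]
    (D : Derivation R A A) {M : Submodule R A} (hM : Set.MapsTo D M M) (m : ℕ) :
    Set.MapsTo D ↑(M ^ m) ↑(M ^ m) := by
  intro x hx
  induction hx using Submodule.pow_induction_on_left' with
  | algebraMap r => simp
  | add x y i _ _ hx hy => rw [map_add]; exact add_mem hx hy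
  | mem_mul a ha i x hx hDx =>
    rw [D.leibniz, smul_eq_mul, smul_eq_mul]
    refine add_mem ?_ ?_
    · rw [pow_succ']; exact Submodule.mul_mem_mul ha hDx
    · rw [pow_succ]; exact Submodule.mul_mem_mul hx (hM ha)

namespace MvPolynomial

section PowerSums

variable {σ K : Type*} [Fintype σ] [Field K] [CharZero K]

theorem esymm_mem_adjoin_psum (k : ℕ) :
    esymm σ K k ∈ Algebra.adjoin K (psum σ K '' Set.Ici 1) := by
  induction k using Nat.strong_induction_on with
  | _ k ih =>
    rcases Nat.eq_zero_or_pos k with rfl | hk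
    · simp [one_mem]
    have hk' : (k : K) ≠ 0 := Nat.cast_ne_zero.mpr hk.ne'
    rw [← inv_smul_smul₀ hk' (esymm σ K k), Algebra.smul_def (k : K) (esymm σ K k), map_natCast,
      mul_esymm_eq_sum]
    refine Subalgebra.smul_mem _ (mul_mem (pow_mem (neg_mem (one_mem _)) _) (sum_mem ?_)) _
    rintro ⟨a, b⟩ hab
    simp only [Finset.mem_filter, Finset.HasAntidiagonal.mem_antidiagonal] at hab
    exact mul_mem (mul_mem (pow_mem (neg_mem (one_mem _)) _) (ih a hab.2))
      (Algebra.subset_adjoin ⟨b, Set.mem_Ici.mpr (by omega), rfl⟩)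

theorem IsSymmetric.mem_adjoin_psum {p : MvPolynomial σ K} (hp : p.IsSymmetric) :
    p ∈ Algebra.adjoin K (psum σ K '' Set.Ici 1) := by
  obtain ⟨r, hr⟩ := esymmAlgHom_surjective K le_rfl ⟨p, hp⟩
  have hp_mem :
      p ∈ Algebra.adjoin K (Set.range fun i : Fin (Fintype.card σ) => esymm σ K (i + 1)) := by
    rw [Algebra.adjoin_range_eq_range_aeval]
    exact ⟨r, by simpa [esymmAlgHom_apply] using congrArg Subtype.val hr⟩
  refine Algebra.adjoin_le ?_ hp_mem
  rintro _ ⟨i, rfl⟩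
  exact esymm_mem_adjoin_psum _

end PowerSums

section SteenrodDerivation

variable {σ R : Type*} [Fintype σ] [CommSemiring R]

variable (σ R) in
noncomputable def steenrodDerivation (k : ℕ) :
    Derivation R (MvPolynomial σ R) (MvPolynomial σ R) :=
  ∑ i : σ, (X i ^ (k + 1) : MvPolynomial σ R) •
    (pderiv i : Derivation R (MvPolynomial σ R) (MvPolynomial σ R))

theorem steenrodDerivation_apply (k : ℕ) (p : MvPolynomial σ R) :
    steenrodDerivation σ R k p = ∑ i, X i ^ (k + 1) * pderiv i p := by
  rw [steenrodDerivation, ← Derivation.coeFnAddMonoidHom_apply, map_sum, Finset.sum_apply]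
  simp [Derivation.coeFnAddMonoidHom_apply]

theorem steenrodDerivation_psum (k j : ℕ) :
    steenrodDerivation σ R k (psum σ R j) = j • psum σ R (j + k) := by
  classical
  simp only [steenrodDerivation_apply, psum, Finset.smul_sum]
  refine Finset.sum_congr rfl fun i _ => ?_
  rw [map_sum, Finset.sum_eq_single i (fun t _ ht => by rw [pderiv_pow, pderiv_X_of_ne ht,
    mul_zero]) (by simp), pderiv_pow, pderiv_X_self, mul_one, nsmul_eq_mul]
  rcases j with _ | j
  · simp
  · rw [Nat.add_sub_cancel, Nat.add_right_comm, pow_succ]; ring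

theorem rename_steenrodDerivation (k : ℕ) (e : Equiv.Perm σ) (p : MvPolynomial σ R) :
    rename e (steenrodDerivation σ R k p) = steenrodDerivation σ R k (rename e p) := by
  simp only [steenrodDerivation_apply, map_sum, map_mul, map_pow, rename_X]
  exact Fintype.sum_equiv e _ _ fun i => by rw [pderiv_rename e.injective]

theorem constantCoeff_steenrodDerivation (k : ℕ) (p : MvPolynomial σ R) :
    constantCoeff (steenrodDerivation σ R k p) = 0 := by
  simp [steenrodDerivation_apply]

end SteenrodDerivation

end MvPolynomial

section Steenrod

variable {K : Type} [Field K] {q : K} {n : ℕ}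

theorem steenrodP_apply (k : ℕ) (p : MvPolynomial (Fin n) K) :
    steenrodP K q n k p = psum (Fin n) K k * p + q • steenrodDerivation (Fin n) K k p := by
  simp only [steenrodP, LinearMap.sum_apply, LinearMap.comp_apply, LinearMap.add_apply,
    LinearMap.id_apply, LinearMap.smul_apply, LinearMap.mulLeft_apply, Derivation.coeFn_coe,
    steenrodDerivation_apply, psum, Finset.sum_mul, Finset.smul_sum, ← Finset.sum_add_distrib]
  refine Finset.sum_congr rfl fun i _ => ?_
  rw [smul_eq_C_mul, smul_eq_C_mul]
  ring

theorem isSymmetric_steenrodP {k : ℕ} {p : MvPolynomial (Fin n) K} (hp : p.IsSymmetric) :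
    (steenrodP K q n k p).IsSymmetric := fun e => by
  rw [steenrodP_apply, map_add, map_mul, map_smul, rename_steenrodDerivation, rename_psum, hp e]

theorem constantCoeff_steenrodP {k : ℕ} (hk : k ≠ 0) (p : MvPolynomial (Fin n) K) :
    constantCoeff (steenrodP K q n k p) = 0 := by
  simp [steenrodP_apply, psum, zero_pow hk, smul_eq_C_mul, constantCoeff_steenrodDerivation]

theorem constantCoeff_eq_zero_of_mem_qHit {p : MvPolynomial (Fin n) K} (hp : p ∈ qHit K q n) :
    constantCoeff p = 0 := by
  induction hp using Submodule.span_induction with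
  | mem r hr =>
    obtain ⟨k, hk, p, rfl⟩ := Set.mem_iUnion₂.mp hr
    exact constantCoeff_steenrodP (Nat.one_le_iff_ne_zero.mp hk) p
  | zero => simp
  | add a b _ _ ha hb => rw [map_add, ha, hb, add_zero]
  | smul c a _ ha => rw [smul_eq_C_mul, map_mul, ha, mul_zero]

theorem steenrodP_mem_qHit {k : ℕ} (hk : 1 ≤ k) (p : MvPolynomial (Fin n) K) :
    steenrodP K q n k p ∈ qHit K q n :=
  Submodule.subset_span (Set.mem_biUnion (x := k) hk (Set.mem_range_self p))

theorem isSymmetric_apply_of_mem_adjoin_steenrodP {f : Module.End K (MvPolynomial (Fin n) K)}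
    (hf : f ∈ Algebra.adjoin K {g | ∃ k : ℕ, 1 ≤ k ∧ g = steenrodP K q n k})
    {p : MvPolynomial (Fin n) K} (hp : p.IsSymmetric) : (f p).IsSymmetric := by
  induction hf using Algebra.adjoin_induction generalizing p with
  | mem g hg => obtain ⟨k, -, rfl⟩ := hg; exact isSymmetric_steenrodP hp
  | algebraMap r => exact hp.smul r
  | add f g _ _ hf hg => exact (hf hp).add (hg hp)
  | mul f g _ _ hf hg => exact hf (hg hp)

theorem MvPolynomial.IsSymmetric.mem_of_steenrodP_mapsTo [CharZero K]
    {W : Submodule K (MvPolynomial (Fin n) K)} (h1 : 1 ∈ W)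
    (hW : ∀ k, 1 ≤ k → Set.MapsTo (steenrodP K q n k) W W)
    {p : MvPolynomial (Fin n) K} (hp : p.IsSymmetric) : p ∈ W := by
  set s := psum (Fin n) K '' Set.Ici 1
  set M := Submodule.span K s
  have hD (k : ℕ) : Set.MapsTo (steenrodDerivation (Fin n) K k) M M := by
    change M ≤ M.comap (steenrodDerivation (Fin n) K k).toLinearMap
    refine Submodule.span_le.mpr ?_
    rintro _ ⟨j, hj, rfl⟩
    have hjk : psum (Fin n) K (j + k) ∈ M :=
      Submodule.subset_span ⟨j + k, Nat.le_add_right_of_le hj, rfl⟩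
    simpa [steenrodDerivation_psum] using Submodule.smul_of_tower_mem M j hjk
  have hpow (m : ℕ) : M ^ m ≤ W := by
    induction m with
    | zero => exact Submodule.one_le.mpr h1
    | succ m ih =>
      rw [pow_succ', Submodule.span_pow, Submodule.span_mul_span, Submodule.span_le]
      rintro _ ⟨_, ⟨j, hj, rfl⟩, b, hb, rfl⟩
      have hbM : b ∈ M ^ m := by rw [Submodule.span_pow]; exact Submodule.subset_span hb
      have hmul : psum (Fin n) K j * b
          = steenrodP K q n j b - q • steenrodDerivation (Fin n) K j b := by
        rw [steenrodP_apply, add_sub_cancel_right]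
      change psum (Fin n) K j * b ∈ W
      rw [hmul]
      exact sub_mem (hW j hj (ih hbM))
        (W.smul_mem q (ih ((steenrodDerivation (Fin n) K j).mapsTo_pow (hD j) m hbM)))
  exact Algebra.adjoin_le_of_span_pow_le hpow hp.mem_adjoin_psum

end Steenrod

theorem steenrodP_algebra_one_eq_symmetric_general (K : Type) [Field K] [CharZero K] (q : K)
    (n : ℕ) :
    {p : MvPolynomial (Fin n) K |
        ∃ f ∈ Algebra.adjoin K {g : Module.End K (MvPolynomial (Fin n) K) |
            ∃ k : ℕ, 1 ≤ k ∧ g = steenrodP K q n k},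
          f 1 = p}
      = {p : MvPolynomial (Fin n) K | p.IsSymmetric} ∧
    ∀ p : MvPolynomial (Fin n) K, p.IsSymmetric → constantCoeff p = 0 →
      p ∈ qHit K q n := by
  set A := Algebra.adjoin K {g : Module.End K (MvPolynomial (Fin n) K) |
    ∃ k : ℕ, 1 ≤ k ∧ g = steenrodP K q n k}
  refine ⟨Set.ext fun p => ⟨?_, fun hp => ?_⟩, fun p hp hp0 => ?_⟩
  · rintro ⟨f, hf, rfl⟩
    exact isSymmetric_apply_of_mem_adjoin_steenrodP hf .one
  · have hvalues := hp.mem_of_steenrodP_mapsTo (q := q)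
      (W := (Subalgebra.toSubmodule A).map (LinearMap.applyₗ 1)) ⟨1, one_mem A, rfl⟩
      (by rintro k hk _ ⟨f, hf, rfl⟩
          exact ⟨_, A.mul_mem (Algebra.subset_adjoin ⟨k, hk, rfl⟩) hf, rfl⟩)
    simpa using hvalues
  · obtain ⟨z, hz, _, hc, rfl⟩ := Submodule.mem_sup.mp <|
      hp.mem_of_steenrodP_mapsTo (q := q) (W := qHit K q n ⊔ K ∙ 1)
        (Submodule.mem_sup_right (Submodule.mem_span_singleton_self 1))
        fun k hk x _ => Submodule.mem_sup_left (steenrodP_mem_qHit hk x)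
    obtain ⟨c, rfl⟩ := Submodule.mem_span_singleton.mp hc
    have hc0 : c = 0 := by
      simpa [constantCoeff_eq_zero_of_mem_qHit hz, smul_eq_C_mul] using hp0
    simpa [hc0] using hz

/-- The set `{f(1) : f in the unital subalgebra of `End K[x_1,…,x_n]`
generated by the `P_k`, `k ≥ 1`}` is exactly the set of symmetric polynomials; in
particular, every symmetric polynomial with zero constant term is `q`-hit. -/
theorem steenrodP_algebra_one_eq_symmetric (K : Type) [Field K] [CharZero K] (q : K)
    (n : ℕ) (hn : 1 ≤ n) :
    {p : MvPolynomial (Fin n) K |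
        ∃ f ∈ Algebra.adjoin K {g : Module.End K (MvPolynomial (Fin n) K) |
            ∃ k : ℕ, 1 ≤ k ∧ g = steenrodP K q n k},
          f 1 = p}
      = {p : MvPolynomial (Fin n) K | p.IsSymmetric} ∧
    ∀ p : MvPolynomial (Fin n) K, p.IsSymmetric → constantCoeff p = 0 →
      p ∈ qHit K q n :=
  steenrodP_algebra_one_eq_symmetric_general K q n
end

section
/- For every field K of characteristic zero, every q ∈ K, and every n ≥ 1, the family of operators (P_λ), indexed by all partitions λ (including the empty partition) having at most n parts, is linearly independent in the space of K-linear endomorphisms of K[x_1,…,x_n]. -/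
/-! Apply `P_λ` to `1` and read off the coefficient of a monomial `x^v` whose nonzero exponents
form `λ`. Each `P_k` enlarges the support of a monomial by at most one variable, so `P_μ(1)` has no
monomial in more than `ℓ(μ)` variables. On a monomial in exactly `ℓ(μ)` variables every step must
have created a new variable with exponent exactly `k`, so the factor `1 + q(v_i - k)` is `1`: the
coefficient is a natural number, nonzero exactly when the exponents of `v` form `μ`. Ordering
partitions by length, the coefficient matrix is therefore triangular with nonzero diagonal in
characteristic zero. -/

open MvPolynomial

open Finset

theorem linearIndependent_of_triangular {ι R M α : Type*} [Ring R] [NoZeroDivisors R]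
    [AddCommGroup M] [Module R M] [LinearOrder α] {f : ι → M} (g : ι → M →ₗ[R] R)
    (r : ι → α) (hdiag : ∀ i, g i (f i) ≠ 0)
    (hoff : ∀ i j, j ≠ i → r j ≤ r i → g i (f j) = 0) :
    LinearIndependent R f := by
  classical
  rw [linearIndependent_iff]
  intro c hc
  by_contra hne
  obtain ⟨i, hi, hmax⟩ := c.support.exists_max_image r (Finsupp.support_nonempty_iff.2 hne)
  have hci : c i * g i (f i) = 0 := by
    have := congrArg (g i) hc
    rwa [Finsupp.linearCombination_apply, Finsupp.sum, map_sum, map_zero,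
      sum_eq_single_of_mem i hi fun j hj hji => by
        rw [map_smul, hoff i j hji (hmax j hj), smul_zero], map_smul, smul_eq_mul] at this
  exact Finsupp.mem_support_iff.1 hi ((mul_eq_zero.1 hci).resolve_right (hdiag i))

section ExponentMultiset

variable {σ : Type*}

def exponentMultiset (v : σ →₀ ℕ) : Multiset ℕ := v.support.val.map v

@[simp]
lemma card_exponentMultiset (v : σ →₀ ℕ) : Multiset.card (exponentMultiset v) = #v.support :=
  Multiset.card_map _ _

lemma exponentMultiset_eq_cons {v : σ →₀ ℕ} {i : σ} {k : ℕ} (h : v i = k) (hk : 0 < k) :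
    exponentMultiset v = k ::ₘ exponentMultiset (v - Finsupp.single i k) := by
  classical
  have hsupp : (v - Finsupp.single i k).support = v.support.erase i := by
    ext j
    rcases eq_or_ne j i with rfl | hji
    · simp [h]
    · simp [hji]
  have hi : i ∈ v.support := by rw [Finsupp.mem_support_iff, h]; omega
  rw [exponentMultiset, exponentMultiset, hsupp, ← insert_erase hi,
    insert_val_of_notMem (notMem_erase i _), Multiset.map_cons, h,
    erase_insert (notMem_erase i _)]
  refine congrArg _ (Multiset.map_congr rfl fun j hj => ?_)
  have hji : j ≠ i := ne_of_mem_erase hj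
  simp [Ne.symm hji]

lemma card_support_le_card_support_sub_single (v : σ →₀ ℕ) (i : σ) (k : ℕ) :
    #v.support ≤ #(v - Finsupp.single i k).support + 1 := by
  classical
  calc #v.support ≤ #(insert i (v - Finsupp.single i k).support) := by
        refine card_le_card fun j hj => ?_
        rcases eq_or_ne j i with rfl | hji
        · exact mem_insert_self _ _
        · simpa [hji] using hj
    _ ≤ _ := card_insert_le _ _

lemma support_subset_support_sub_single {v : σ →₀ ℕ} {i : σ} {k : ℕ} (h : k < v i) :
    v.support ⊆ (v - Finsupp.single i k).support := by
  classical
  intro j hj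
  rcases eq_or_ne j i with rfl | hji
  · rw [Finsupp.mem_support_iff, Finsupp.tsub_apply, Finsupp.single_eq_same]
    omega
  · simpa [hji] using hj

lemma exists_exponentMultiset_eq [Fintype σ] (l : List ℕ) (hl : ∀ x ∈ l, 0 < x)
    (hlen : l.length ≤ Fintype.card σ) : ∃ v : σ →₀ ℕ, exponentMultiset v = l := by
  induction l with
  | nil => exact ⟨0, rfl⟩
  | cons k l ih =>
    have hlt : l.length < Fintype.card σ := hlen
    obtain ⟨w, hw⟩ := ih (fun x hx => hl x (List.mem_cons_of_mem k hx)) hlt.le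
    obtain ⟨i, -, hi⟩ := exists_mem_notMem_of_card_lt_card (s := w.support) (t := univ) (by
      rwa [← card_exponentMultiset, hw, card_univ, Multiset.coe_card])
    refine ⟨w + Finsupp.single i k, ?_⟩
    rw [exponentMultiset_eq_cons (i := i) (k := k) (by simpa using hi) (hl k List.mem_cons_self),
      add_tsub_cancel_right, hw]
    rfl

end ExponentMultiset

lemma MvPolynomial.coeff_X_mul_pderiv {R σ : Type*} [CommSemiring R] (i : σ)
    (p : MvPolynomial σ R) (v : σ →₀ ℕ) :
    coeff v (X i * pderiv i p) = v i * coeff v p := by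
  classical
  induction p using MvPolynomial.induction_on' with
  | monomial u a =>
    rw [X_mul_pderiv_monomial, coeff_smul, coeff_monomial]
    split_ifs with h <;> simp [h]
  | add p r hp hr => rw [map_add, mul_add, coeff_add, coeff_add, hp, hr, mul_add]

section SteenrodCoefficients

variable {K : Type} [Field K] {n : ℕ} (q : K)

lemma coeff_steenrodP (k : ℕ) (p : MvPolynomial (Fin n) K) (v : Fin n →₀ ℕ) :
    coeff v (steenrodP K q n k p) =
      ∑ i, if k ≤ v i then (1 + q * (v i - k : ℕ)) * coeff (v - Finsupp.single i k) p
        else 0 := by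
  rw [steenrodP, LinearMap.sum_apply, coeff_sum]
  refine sum_congr rfl fun i _ => ?_
  rw [LinearMap.comp_apply, LinearMap.mulLeft_apply, X_pow_eq_monomial, coeff_monomial_mul']
  simp only [Finsupp.single_le_iff]
  split_ifs
  · simp only [LinearMap.add_apply, LinearMap.id_coe, id_eq, LinearMap.smul_apply,
      LinearMap.coe_comp, Derivation.coeFn_coe, Function.comp_apply, LinearMap.mulLeft_apply,
      coeff_add, coeff_smul, coeff_X_mul_pderiv, Finsupp.coe_tsub, Pi.sub_apply,
      Finsupp.single_eq_same, smul_eq_mul, one_mul]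
    ring
  · rfl

@[simp]
lemma steenrodPList_cons (k : ℕ) (l : List ℕ) :
    steenrodPList K q n (k :: l) = steenrodP K q n k * steenrodPList K q n l := by
  simp [steenrodPList]

lemma coeff_steenrodPList_one_eq_zero {l : List ℕ} {v : Fin n →₀ ℕ}
    (hv : l.length < #v.support) : coeff v (steenrodPList K q n l 1) = 0 := by
  induction l generalizing v with
  | nil =>
    have hv0 : v ≠ 0 := by rintro rfl; simp at hv
    simp [steenrodPList, coeff_one, Ne.symm hv0]
  | cons k l ih =>
    rw [steenrodPList_cons, Module.End.mul_apply, coeff_steenrodP]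
    refine sum_eq_zero fun i _ => ?_
    split_ifs
    · have := card_support_le_card_support_sub_single v i k
      rw [ih (by rw [List.length_cons] at hv; omega), mul_zero]
    · rfl

lemma coeff_steenrodPList_cons_one {k : ℕ} {l : List ℕ} {v : Fin n →₀ ℕ}
    (hv : #v.support = l.length + 1) :
    coeff v (steenrodPList K q n (k :: l) 1) =
      ∑ i, if v i = k then coeff (v - Finsupp.single i k) (steenrodPList K q n l 1) else 0 := by
  rw [steenrodPList_cons, Module.End.mul_apply, coeff_steenrodP]
  refine sum_congr rfl fun i _ => ?_
  rcases lt_trichotomy k (v i) with hlt | rfl | hgt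
  · have := card_le_card (support_subset_support_sub_single hlt)
    rw [if_pos hlt.le, if_neg hlt.ne', coeff_steenrodPList_one_eq_zero q (by omega), mul_zero]
  · simp
  · rw [if_neg (not_le.2 hgt), if_neg hgt.ne]

lemma exists_coeff_steenrodPList_one_eq_natCast {l : List ℕ} (hl : ∀ x ∈ l, 0 < x)
    {v : Fin n →₀ ℕ} (hv : #v.support = l.length) :
    ∃ N : ℕ, coeff v (steenrodPList K q n l 1) = N ∧ (N ≠ 0 ↔ exponentMultiset v = l) := by
  induction l generalizing v with
  | nil =>
    obtain rfl : v = 0 := by simpa using hv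
    exact ⟨1, by simp [steenrodPList], by simp [exponentMultiset]⟩
  | cons k l ih =>
    have key : ∀ i, ∃ N : ℕ,
        (if v i = k then coeff (v - Finsupp.single i k) (steenrodPList K q n l 1) else 0) = N ∧
          (N ≠ 0 ↔ v i = k ∧ exponentMultiset v = ↑(k :: l)) := by
      intro i
      by_cases hi : v i = k
      · have hcons := exponentMultiset_eq_cons hi (hl k List.mem_cons_self)
        have hcard := congrArg Multiset.card hcons
        rw [card_exponentMultiset, Multiset.card_cons, card_exponentMultiset, hv,
          List.length_cons] at hcard
        obtain ⟨N, hN, hNl⟩ := ih (fun x hx => hl x (List.mem_cons_of_mem k hx))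
          (v := v - Finsupp.single i k) (by omega)
        refine ⟨N, by rw [if_pos hi, hN], ?_⟩
        rw [hNl, hcons, ← Multiset.cons_coe, Multiset.cons_inj_right, and_iff_right hi]
      · exact ⟨0, by simp [hi], by simp [hi]⟩
    choose N hN hNiff using key
    refine ⟨∑ i, N i, ?_, ?_⟩
    · rw [coeff_steenrodPList_cons_one q (by simpa using hv), Nat.cast_sum]
      exact sum_congr rfl fun i _ => hN i
    · rw [Ne, sum_eq_zero_iff]
      simp only [mem_univ, true_implies, not_forall, hNiff]
      refine ⟨fun ⟨_, _, h⟩ => h, fun h => ?_⟩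
      obtain ⟨i, -, hi⟩ := Multiset.mem_map.1 (h ▸ List.mem_cons_self : k ∈ exponentMultiset v)
      exact ⟨i, hi, h⟩

lemma coeff_steenrodPList_one_ne_zero [CharZero K] {l : List ℕ} (hl : ∀ x ∈ l, 0 < x)
    {v : Fin n →₀ ℕ} (hv : exponentMultiset v = l) : coeff v (steenrodPList K q n l 1) ≠ 0 := by
  obtain ⟨N, hN, hNl⟩ := exists_coeff_steenrodPList_one_eq_natCast q hl (v := v)
    (by rw [← card_exponentMultiset, hv, Multiset.coe_card])
  rw [hN]
  exact Nat.cast_ne_zero.2 (hNl.2 hv)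

lemma exponentMultiset_eq_of_coeff_steenrodPList_one_ne_zero {l : List ℕ}
    (hl : ∀ x ∈ l, 0 < x) {v : Fin n →₀ ℕ} (hv : l.length ≤ #v.support)
    (h : coeff v (steenrodPList K q n l 1) ≠ 0) : exponentMultiset v = l := by
  obtain hlt | heq := hv.lt_or_eq
  · exact absurd (coeff_steenrodPList_one_eq_zero q hlt) h
  · obtain ⟨N, hN, hNl⟩ := exists_coeff_steenrodPList_one_eq_natCast q hl heq.symm
    exact hNl.1 (by rintro rfl; simp [hN] at h)

end SteenrodCoefficients

theorem steenrodPList_linearIndependent_general (K : Type) [Field K] [CharZero K] (q : K)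
    (n : ℕ) :
    LinearIndependent K
      (fun l : {l : List ℕ // l.Pairwise (· ≥ ·) ∧ (∀ x ∈ l, 1 ≤ x) ∧ l.length ≤ n} =>
        steenrodPList K q n l.1) := by
  choose v hv using
    fun l : {l : List ℕ // l.Pairwise (· ≥ ·) ∧ (∀ x ∈ l, 1 ≤ x) ∧ l.length ≤ n} =>
      exists_exponentMultiset_eq (σ := Fin n) l.1 l.2.2.1 (by simpa using l.2.2.2)
  refine linearIndependent_of_triangular (fun l => lcoeff K (v l) ∘ₗ LinearMap.applyₗ 1)
    (fun l => l.1.length) (fun l => coeff_steenrodPList_one_ne_zero q l.2.2.1 (hv l))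
    fun l μ hne hlen => ?_
  by_contra h
  have hμ := exponentMultiset_eq_of_coeff_steenrodPList_one_ne_zero q μ.2.2.1
    (by rwa [← card_exponentMultiset, hv l, Multiset.coe_card]) h
  exact hne (Subtype.ext (List.Perm.eq_of_pairwise' μ.2.1 l.2.1
    (Multiset.coe_eq_coe.1 (hμ.symm.trans (hv l)))))

/-- The operators `P_λ`, indexed by all partitions `λ` (including the
empty one) with at most `n` parts, are linearly independent in `End K[x_1,…,x_n]`. -/
theorem steenrodPList_linearIndependent (K : Type) [Field K] [CharZero K] (q : K)
    (n : ℕ) (hn : 1 ≤ n) :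
    LinearIndependent K
      (fun l : {l : List ℕ // l.Pairwise (· ≥ ·) ∧ (∀ x ∈ l, 1 ≤ x) ∧ l.length ≤ n} =>
        steenrodPList K q n l.1) :=
  steenrodPList_linearIndependent_general K q n
end

section
/- For every field K of characteristic zero, every q ∈ K, every n ≥ 1, every k ≥ 1, and all polynomials p, r ∈ K[x_1,…,x_n], one has B(P_k(p), r) = B(p, P_k^*(r)); that is, the dual operator P_k^* is the adjoint of P_k with respect to the bilinear form B. -/
open MvPolynomial

/-!
Multiplication by `x_i` and `∂/∂x_i` are adjoint for `B`: on monomials this is the identity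
`(m + e_i)! = (m_i + 1) ⬝ m!`. As `B` is symmetric, the Euler-type operator `x_i ∂_i` is then
self-adjoint, and the adjoint of `x_i^k (1 + q x_i ∂_i)` is `(1 + q x_i ∂_i) ∂_i^k`, which is
the `i`-th summand of `P_k^*`.
-/

namespace LinearMap

variable {R M M₁ M₂ : Type*} [CommSemiring R] [AddCommMonoid M] [Module R M]
  [AddCommMonoid M₁] [Module R M₁] [AddCommMonoid M₂] [Module R M₂]
  {B : M →ₗ[R] M →ₗ[R] M₂} {B' : M₁ →ₗ[R] M₁ →ₗ[R] M₂}

theorem IsAdjointPair.pow {f g : Module.End R M} (h : IsAdjointPair B B f g) (k : ℕ) :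
    IsAdjointPair B B ⇑(f ^ k) ⇑(g ^ k) := by
  induction k with
  | zero => exact isAdjointPair_one
  | succ k ih => rw [pow_succ f, pow_succ' g]; exact ih.mul h

theorem IsAdjointPair.sum {ι : Type*} (s : Finset ι) {f : ι → M →ₗ[R] M₁}
    {g : ι → M₁ →ₗ[R] M} (h : ∀ i ∈ s, IsAdjointPair B B' ⇑(f i) ⇑(g i)) :
    IsAdjointPair B B' ⇑(∑ i ∈ s, f i) ⇑(∑ i ∈ s, g i) := fun x y => by
  simp only [sum_apply, map_sum]
  exact Finset.sum_congr rfl fun i hi => h i hi x y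

theorem IsAdjointPair.swap {B : LinearMap.BilinForm R M} (hB : B.IsSymm) {f g : M → M}
    (h : IsAdjointPair B B f g) : IsAdjointPair B B g f := fun x y => by
  rw [← hB.eq, ← h]
  exact hB.eq _ _

end LinearMap

theorem Finsupp.prod_factorial_single_add {σ : Type*} [Fintype σ] (i : σ) (a : σ →₀ ℕ) :
    ∏ j, ((single i 1 + a : σ →₀ ℕ) j).factorial = (a i + 1) * ∏ j, (a j).factorial := by
  classical
  have hj : ∀ j, ((single i 1 + a : σ →₀ ℕ) j).factorial
      = (if i = j then a i + 1 else 1) * (a j).factorial := by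
    intro j
    rcases eq_or_ne i j with rfl | hij
    · simp [add_comm 1, Nat.factorial_succ]
    · simp [hij]
  rw [Finset.prod_congr rfl fun j _ => hj j, Finset.prod_mul_distrib, Finset.prod_ite_eq]
  simp

variable {K : Type} [Field K] {n : ℕ}

theorem formB_eq_sum_of_support_subset {p r : MvPolynomial (Fin n) K}
    {s : Finset (Fin n →₀ ℕ)} (hs : p.support ⊆ s) :
    formB p r = ∑ m ∈ s, (∏ i, ((m i).factorial : K)) * p.coeff m * r.coeff m :=
  Finset.sum_subset hs fun m _ hm => by simp [notMem_support_iff.mp hm]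

theorem formB_comm (p r : MvPolynomial (Fin n) K) : formB p r = formB r p := by
  rw [formB_eq_sum_of_support_subset (s := p.support ∪ r.support) Finset.subset_union_left,
    formB_eq_sum_of_support_subset (s := p.support ∪ r.support) Finset.subset_union_right]
  exact Finset.sum_congr rfl fun m _ => by ring

theorem formB_add_left (p p' r : MvPolynomial (Fin n) K) :
    formB (p + p') r = formB p r + formB p' r := by
  let s := p.support ∪ p'.support
  rw [formB_eq_sum_of_support_subset (s := s) support_add,
    formB_eq_sum_of_support_subset (s := s) Finset.subset_union_left,
    formB_eq_sum_of_support_subset (s := s) Finset.subset_union_right, ← Finset.sum_add_distrib]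
  exact Finset.sum_congr rfl fun m _ => by rw [coeff_add]; ring

theorem formB_smul_left (c : K) (p r : MvPolynomial (Fin n) K) :
    formB (c • p) r = c * formB p r := by
  rw [formB_eq_sum_of_support_subset support_smul, formB, Finset.mul_sum]
  exact Finset.sum_congr rfl fun m _ => by rw [coeff_smul, smul_eq_mul]; ring

noncomputable def formBBilin : LinearMap.BilinForm K (MvPolynomial (Fin n) K) :=
  LinearMap.mk₂ K formB formB_add_left formB_smul_left
    (fun p r r' => by rw [formB_comm, formB_add_left, formB_comm r, formB_comm r'])
    (fun c p r => by rw [formB_comm, formB_smul_left, formB_comm, smul_eq_mul])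

theorem formBBilin_apply (p r : MvPolynomial (Fin n) K) : formBBilin p r = formB p r := rfl

theorem formBBilin_isSymm :
    (formBBilin : LinearMap.BilinForm K (MvPolynomial (Fin n) K)).IsSymm :=
  ⟨formB_comm⟩

theorem isAdjointPair_mulLeft_X_pderiv (i : Fin n) :
    LinearMap.IsAdjointPair formBBilin formBBilin
      ⇑(LinearMap.mulLeft K (X i : MvPolynomial (Fin n) K)) ⇑(pderiv i).toLinearMap := by
  intro p r
  simp only [formBBilin_apply, LinearMap.mulLeft_apply, formB, support_X_mul, Finset.sum_map,
    addLeftEmbedding_apply, coeff_X_mul, Derivation.coeFn_coe, coeff_pderiv]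
  refine Finset.sum_congr rfl fun a _ => ?_
  rw [← Nat.cast_prod, Finsupp.prod_factorial_single_add, add_comm (Finsupp.single i 1) a]
  push_cast
  ring

theorem isAdjointPair_steenrodP (q : K) (n k : ℕ) :
    LinearMap.IsAdjointPair formBBilin formBBilin
      ⇑(steenrodP K q n k) ⇑(steenrodPdual K q n k) := by
  refine LinearMap.IsAdjointPair.sum _ fun i _ => ?_
  set x : Module.End K (MvPolynomial (Fin n) K) := LinearMap.mulLeft K (X i)
  set d : Module.End K (MvPolynomial (Fin n) K) := (pderiv i).toLinearMap
  have hxd : LinearMap.IsAdjointPair formBBilin formBBilin x d :=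
    isAdjointPair_mulLeft_X_pderiv i
  have heuler : LinearMap.IsAdjointPair formBBilin formBBilin
      ⇑(1 + q • (x * d)) ⇑(1 + q • (x * d)) :=
    LinearMap.isAdjointPair_one.add ((hxd.mul (hxd.swap formBBilin_isSymm)).smul q)
  have hP : x ^ k * (1 + q • (x * d))
      = LinearMap.mulLeft K (X i ^ k) ∘ₗ (LinearMap.id + q • (x ∘ₗ d)) := by
    rw [LinearMap.pow_mulLeft]; rfl
  have hPdual : (1 + q • (x * d)) * d ^ k = d ^ k + q • (x ∘ₗ d ^ (k + 1)) := by
    rw [add_mul, one_mul, smul_mul_assoc, mul_assoc, ← pow_succ']; rfl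
  rw [← hP, ← hPdual]
  exact (hxd.pow k).mul heuler

theorem formB_steenrodP_adjoint_general (K : Type) [Field K] (q : K)
    (n : ℕ) (k : ℕ)
    (p r : MvPolynomial (Fin n) K) :
    formB (steenrodP K q n k p) r = formB p (steenrodPdual K q n k r) :=
  isAdjointPair_steenrodP q n k p r

/-- `P_k^*` is the adjoint of `P_k` with respect to the bilinear form
`B(p,r) = ∑_m m! ⬝ p_m ⬝ r_m`. -/
theorem formB_steenrodP_adjoint (K : Type) [Field K] [CharZero K] (q : K)
    (n : ℕ) (hn : 1 ≤ n) (k : ℕ) (hk : 1 ≤ k)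
    (p r : MvPolynomial (Fin n) K) :
    formB (steenrodP K q n k p) r = formB p (steenrodPdual K q n k r) :=
  formB_steenrodP_adjoint_general K q n k p r
end

section
/- Let ι be a type and let u_1,…,u_k be finitely supported functions from ι to the polynomial ring ℂ[t], viewed also as vectors in the ℂ(t)-vector space of finitely supported functions from ι to the rational function field ℂ(t). Then (i) for every t_0 ∈ ℂ, the rank over ℂ of the family of coordinatewise evaluations (u_1(·)(t_0),…,u_k(·)(t_0)) is at most the rank over ℂ(t) of (u_1,…,u_k), and (ii) the set of t_0 ∈ ℂ for which this inequality is strict is finite. -/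
/-!
A finite family of vectors over a field is linearly independent iff some maximal minor of its
coordinate matrix is nonzero. For vectors of polynomials such a minor is a polynomial `D`; the
same minor of the specialization at `t₀` is `D(t₀)`, and of the image in `ℂ(t)` it is `D`
itself. So independence after specialization forces independence over `ℂ(t)`, which gives (i).
Conversely, a `ℂ(t)`-independent subfamily of maximal size has a nonzero minor `D`, and its
specialization stays independent away from the finitely many roots of `D`, which gives (ii).
-/

/-- View a finitely supported family of polynomials as a vector over the field of
rational functions `ℂ(t)`. -/
noncomputable def finsuppToRatFunc {ι : Type*} (u : ι →₀ Polynomial ℂ) : ι →₀ RatFunc ℂ :=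
  Finsupp.mapRange (algebraMap (Polynomial ℂ) (RatFunc ℂ)) (map_zero _) u

/-- Coordinatewise evaluation at `t0 : ℂ` of a finitely supported family of polynomials. -/
noncomputable def finsuppEvalAt {ι : Type*} (t0 : ℂ) (u : ι →₀ Polynomial ℂ) : ι →₀ ℂ :=
  Finsupp.mapRange (Polynomial.eval t0) (by simp) u

open Polynomial Module Submodule

section Subfamilies

variable {K M ι : Type*} [Field K] [AddCommGroup M] [Module K M] [Finite ι]

theorem exists_linearIndependent_comp_fin_finrank_span (v : ι → M) :
    ∃ f : Fin (finrank K (span K (Set.range v))) → ι, LinearIndependent K (v ∘ f) := by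
  obtain ⟨κ, a, ha, hspan, hli⟩ := exists_linearIndependent' K v
  have : Fintype κ := have := Finite.of_injective a ha; Fintype.ofFinite κ
  have hcard : Fintype.card κ = finrank K (span K (Set.range v)) := by
    rw [← hspan, finrank_span_eq_card hli]
  let e := Fintype.equivFinOfCardEq hcard
  exact ⟨a ∘ e.symm, hli.comp e.symm e.symm.injective⟩

theorem le_finrank_span_of_linearIndependent_comp (v : ι → M) {m : ℕ} {f : Fin m → ι}
    (hf : LinearIndependent K (v ∘ f)) : m ≤ finrank K (span K (Set.range v)) := by
  have : FiniteDimensional K (span K (Set.range v)) :=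
    FiniteDimensional.span_of_finite K (Set.finite_range v)
  calc m = finrank K (span K (Set.range (v ∘ f))) := by
        rw [finrank_span_eq_card hf, Fintype.card_fin]
    _ ≤ finrank K (span K (Set.range v)) :=
        finrank_mono (span_mono (Set.range_comp_subset_range f v))

end Subfamilies

section Minors

variable {K ι κ : Type*} [Field K] [Fintype κ] [DecidableEq κ]

theorem span_range_apply_eq_top_of_linearIndependent {v : κ → ι →₀ K}
    (hv : LinearIndependent K v) : span K (Set.range fun i a => v a i) = ⊤ := by
  by_contra hne
  obtain ⟨f, hf, hker⟩ := exists_le_ker_of_lt_top _ (lt_top_iff_ne_top.mpr hne)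
  set y : κ → K := fun a => f (Pi.single a 1)
  have hy : ∀ x, f x = ∑ a, x a * y a := fun x => by
    conv_lhs => rw [pi_eq_sum_univ' x]
    simp [y]
  have hcomb : ∑ a, y a • v a = 0 := by
    ext i
    simpa [hy, Finsupp.finsetSum_apply, mul_comm] using hker (subset_span ⟨i, rfl⟩)
  have hy0 := Fintype.linearIndependent_iff.mp hv y hcomb
  exact hf (LinearMap.ext fun x => by simp [hy, hy0])

theorem linearIndependent_iff_exists_det_ne_zero (v : κ → ι →₀ K) :
    LinearIndependent K v ↔ ∃ c : κ → ι, (Matrix.of fun a b => v a (c b)).det ≠ 0 := by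
  constructor
  · intro hv
    obtain ⟨κ', c, -, hspan, hli⟩ := exists_linearIndependent' K fun i a => v a i
    rw [span_range_apply_eq_top_of_linearIndependent hv] at hspan
    let e := (Pi.basisFun K κ).indexEquiv (Basis.mk hli hspan.ge)
    refine ⟨c ∘ e, ?_⟩
    rw [← isUnit_iff_ne_zero, ← Matrix.isUnit_iff_isUnit_det,
      ← Matrix.linearIndependent_cols_iff_isUnit]
    exact hli.comp e e.injective
  · rintro ⟨c, hc⟩
    let π : (ι →₀ K) →ₗ[K] κ → K := LinearMap.pi fun b => Finsupp.lapply (c b)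
    exact LinearIndependent.of_comp π (Matrix.linearIndependent_rows_of_det_ne_zero hc)

theorem linearIndependent_mapRange_iff {R : Type*} [CommRing R] (φ : R →+* K)
    (p : κ → ι →₀ R) :
    LinearIndependent K (fun a => Finsupp.mapRange φ φ.map_zero (p a)) ↔
      ∃ c : κ → ι, φ (Matrix.of fun a b => p a (c b)).det ≠ 0 := by
  simp only [linearIndependent_iff_exists_det_ne_zero, RingHom.map_det]
  rfl

end Minors

section Specialization

variable {ι κ : Type*} [Fintype κ] [DecidableEq κ]

theorem linearIndependent_finsuppEvalAt_iff (t0 : ℂ) (p : κ → ι →₀ ℂ[X]) :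
    LinearIndependent ℂ (fun a => finsuppEvalAt t0 (p a)) ↔
      ∃ c : κ → ι, (Matrix.of fun a b => p a (c b)).det.eval t0 ≠ 0 :=
  linearIndependent_mapRange_iff (evalRingHom t0) p

theorem linearIndependent_finsuppToRatFunc_iff (p : κ → ι →₀ ℂ[X]) :
    LinearIndependent (RatFunc ℂ) (fun a => finsuppToRatFunc (p a)) ↔
      ∃ c : κ → ι, (Matrix.of fun a b => p a (c b)).det ≠ 0 := by
  refine (linearIndependent_mapRange_iff (algebraMap ℂ[X] (RatFunc ℂ)) p).trans ?_
  simp only [ne_eq, map_eq_zero_iff _ (IsFractionRing.injective ℂ[X] (RatFunc ℂ))]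

theorem linearIndependent_finsuppToRatFunc_of_finsuppEvalAt {t0 : ℂ} {p : κ → ι →₀ ℂ[X]}
    (h : LinearIndependent ℂ (fun a => finsuppEvalAt t0 (p a))) :
    LinearIndependent (RatFunc ℂ) (fun a => finsuppToRatFunc (p a)) := by
  obtain ⟨c, hc⟩ := (linearIndependent_finsuppEvalAt_iff t0 p).mp h
  exact (linearIndependent_finsuppToRatFunc_iff p).mpr ⟨c, fun h0 => hc (by rw [h0, eval_zero])⟩

theorem finite_setOf_not_linearIndependent_finsuppEvalAt {p : κ → ι →₀ ℂ[X]}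
    (h : LinearIndependent (RatFunc ℂ) (fun a => finsuppToRatFunc (p a))) :
    {t0 : ℂ | ¬LinearIndependent ℂ (fun a => finsuppEvalAt t0 (p a))}.Finite := by
  obtain ⟨c, hc⟩ := (linearIndependent_finsuppToRatFunc_iff p).mp h
  refine (finite_setOfPred_isRoot hc).subset fun t0 ht0 => ?_
  by_contra hroot
  exact ht0 ((linearIndependent_finsuppEvalAt_iff t0 p).mpr ⟨c, hroot⟩)

end Specialization

/-- (i) For every `t0 : ℂ` the rank over `ℂ` of the specialized family
is at most the rank over `ℂ(t)` of the original family; (ii) the set of `t0` where the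
inequality is strict is finite. -/
theorem rank_of_specialization {ι : Type} (k : ℕ) (u : Fin k → (ι →₀ Polynomial ℂ)) :
    (∀ t0 : ℂ,
      Module.finrank ℂ
          (Submodule.span ℂ (Set.range fun j => finsuppEvalAt t0 (u j)))
        ≤ Module.finrank (RatFunc ℂ)
            (Submodule.span (RatFunc ℂ) (Set.range fun j => finsuppToRatFunc (u j)))) ∧
    {t0 : ℂ |
      Module.finrank ℂ
          (Submodule.span ℂ (Set.range fun j => finsuppEvalAt t0 (u j)))
        < Module.finrank (RatFunc ℂ)
            (Submodule.span (RatFunc ℂ) (Set.range fun j => finsuppToRatFunc (u j)))}.Finite := by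
  refine ⟨fun t0 => ?_, ?_⟩
  · obtain ⟨f, hf⟩ :=
      exists_linearIndependent_comp_fin_finrank_span (K := ℂ) fun j => finsuppEvalAt t0 (u j)
    exact le_finrank_span_of_linearIndependent_comp (fun j => finsuppToRatFunc (u j))
      (linearIndependent_finsuppToRatFunc_of_finsuppEvalAt (p := u ∘ f) hf)
  · obtain ⟨f, hf⟩ := exists_linearIndependent_comp_fin_finrank_span (K := RatFunc ℂ)
      fun j => finsuppToRatFunc (u j)
    refine (finite_setOf_not_linearIndependent_finsuppEvalAt (p := u ∘ f) hf).subset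
      fun t0 hlt hli => ?_
    exact (le_finrank_span_of_linearIndependent_comp
      (fun j => finsuppEvalAt t0 (u j)) hli).not_gt hlt
end

section
/- Take K = ℂ(q), the field of rational functions over ℂ, with q the indeterminate. For every n ≥ 1, every polynomial p ∈ K[x_1,…,x_n] can be written as p = h + s where h is q-hit and s is classical-harmonic; that is, the q-hit polynomials together with the classical harmonics span all of K[x_1,…,x_n]. -/
open MvPolynomial

/-!
At `q = 0` the operator `P_k` is multiplication by the power sum `∑ xᵢᵏ`, and for the Fischer
form `⟨f, g⟩ = ∑ m! f_m g_m` (`formB`) multiplication by `xᵢ` is adjoint to `∂ᵢ`. So a polynomial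
`v` of degree `≤ d` orthogonal to the classical hits of degree `≤ d` is harmonic; if it is also
orthogonal to the harmonics, pairing it with its complex conjugate gives `∑ m! |v_m|² = 0`. Hence
classical hits and harmonics span the polynomials of degree `≤ d` over `ℂ`.

The hits `P_k(x^m)` have coefficients in `ℂ[q]`, and a family over `ℂ[q]` that is linearly
independent at `q = 0` stays independent over `ℂ(q)`. So a basis of the polynomials of degree `≤ d`
chosen at `q = 0` among hits and harmonics lifts to a basis over `ℂ(q)`.
-/

namespace QSteenrod

section PowerSumPderiv

variable {R S σ : Type*} [CommSemiring R] [CommSemiring S]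

lemma coeff_pderiv_pow_eq_zero {i : σ} {k : ℕ} {f : MvPolynomial σ R} {m : σ →₀ ℕ}
    (h : f.totalDegree < m.degree + k) : coeff m (((pderiv i).toLinearMap ^ k) f) = 0 := by
  induction k generalizing m with
  | zero =>
    refine notMem_support_iff.mp fun hm => ?_
    have hd : f.totalDegree < m.degree := h
    exact hd.not_ge (le_totalDegree hm)
  | succ k ih =>
    rw [pow_succ', Module.End.mul_apply, Derivation.coeFn_coe, coeff_pderiv,
      ih (by rw [map_add, Finsupp.degree_single]; omega), zero_mul]

lemma map_mem_restrictTotalDegree (φ : R →+* S) {d : ℕ} {f : MvPolynomial σ R}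
    (hf : f ∈ restrictTotalDegree σ R d) : map φ f ∈ restrictTotalDegree σ S d := by
  rw [mem_restrictTotalDegree] at hf ⊢
  exact (Finset.sup_mono (support_map_subset φ f)).trans hf

variable [Fintype σ]

variable (R σ) in
noncomputable def powerSumPderiv (k : ℕ) : Module.End R (MvPolynomial σ R) :=
  ∑ i : σ, (pderiv i).toLinearMap ^ k

lemma powerSumPderiv_apply (k : ℕ) (f : MvPolynomial σ R) :
    powerSumPderiv R σ k f = ∑ i : σ, ((pderiv i).toLinearMap ^ k) f :=
  LinearMap.sum_apply _ _ _

lemma coeff_powerSumPderiv_eq_zero {k : ℕ} {f : MvPolynomial σ R} {m : σ →₀ ℕ}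
    (h : f.totalDegree < m.degree + k) : coeff m (powerSumPderiv R σ k f) = 0 := by
  rw [powerSumPderiv_apply, coeff_sum]
  exact Finset.sum_eq_zero fun i _ => coeff_pderiv_pow_eq_zero h

lemma map_powerSumPderiv (φ : R →+* S) (k : ℕ) (f : MvPolynomial σ R) :
    map φ (powerSumPderiv R σ k f) = powerSumPderiv S σ k (map φ f) := by
  simp only [powerSumPderiv_apply, map_sum]
  refine Finset.sum_congr rfl fun i _ => ?_
  induction k with
  | zero => rfl
  | succ k ih => rw [pow_succ', Module.End.mul_apply, pow_succ', Module.End.mul_apply,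
      Derivation.coeFn_coe, Derivation.coeFn_coe, ← pderiv_map, ih]

variable (R σ) in
noncomputable def harmonics : Submodule R (MvPolynomial σ R) :=
  ⨅ (k : ℕ) (_ : 1 ≤ k), LinearMap.ker (powerSumPderiv R σ k)

lemma mem_harmonics {f : MvPolynomial σ R} :
    f ∈ harmonics R σ ↔ ∀ k, 1 ≤ k → powerSumPderiv R σ k f = 0 := by
  simp [harmonics]

lemma map_mem_harmonics (φ : R →+* S) {f : MvPolynomial σ R} (hf : f ∈ harmonics R σ) :
    map φ f ∈ harmonics S σ :=
  mem_harmonics.mpr fun k hk => by rw [← map_powerSumPderiv, mem_harmonics.mp hf k hk, map_zero]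

end PowerSumPderiv

section SteenrodMonomial

variable {R S σ : Type*} [CommSemiring R] [CommSemiring S] [Fintype σ]

/-- `P_k(x^m)`, written over any commutative semiring so that `q` can be specialised. -/
noncomputable def steenrodMonomial (q : R) (k : ℕ) (m : σ →₀ ℕ) : MvPolynomial σ R :=
  ∑ i, monomial (m + Finsupp.single i k) (1 + m i • q)

lemma map_steenrodMonomial (φ : R →+* S) (q : R) (k : ℕ) (m : σ →₀ ℕ) :
    map φ (steenrodMonomial q k m) = steenrodMonomial (φ q) k m := by
  simp [steenrodMonomial, map_sum, map_monomial]

lemma steenrodMonomial_zero (k : ℕ) (m : σ →₀ ℕ) :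
    steenrodMonomial (0 : R) k m = ∑ i, monomial m 1 * X i ^ k := by
  simp [steenrodMonomial, X_pow_eq_monomial, monomial_mul]

lemma totalDegree_steenrodMonomial_le (q : R) (k : ℕ) (m : σ →₀ ℕ) :
    (steenrodMonomial q k m).totalDegree ≤ m.degree + k := by
  refine (totalDegree_finsetSum _ _).trans (Finset.sup_le fun i _ => ?_)
  refine (totalDegree_monomial_le _ _).trans_eq ?_
  exact map_add Finsupp.degree _ _ |>.trans (by rw [Finsupp.degree_single])

variable (σ) in
def steenrodHits (q : R) (d : ℕ) : Set (MvPolynomial σ R) :=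
  {f | ∃ k m, 1 ≤ k ∧ m.degree + k ≤ d ∧ steenrodMonomial q k m = f}

lemma image_map_steenrodHits (φ : R →+* S) (q : R) (d : ℕ) :
    map φ '' steenrodHits σ q d = steenrodHits σ (φ q) d := by
  ext f
  simp only [steenrodHits, Set.mem_image, Set.mem_ofPred_eq]
  constructor
  · rintro ⟨_, ⟨k, m, hk, hkm, rfl⟩, rfl⟩
    exact ⟨k, m, hk, hkm, (map_steenrodMonomial φ q k m).symm⟩
  · rintro ⟨k, m, hk, hkm, rfl⟩
    exact ⟨_, ⟨k, m, hk, hkm, rfl⟩, map_steenrodMonomial φ q k m⟩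

lemma steenrodHits_subset_restrictTotalDegree (q : R) (d : ℕ) :
    steenrodHits σ q d ⊆ restrictTotalDegree σ R d := by
  rintro _ ⟨k, m, -, hkm, rfl⟩
  exact (mem_restrictTotalDegree _ _ _).mpr ((totalDegree_steenrodMonomial_le q k m).trans hkm)

end SteenrodMonomial

section SteenrodOperator

variable {K : Type} [Field K] {n : ℕ}

lemma steenrodP_monomial_one (q : K) (k : ℕ) (m : Fin n →₀ ℕ) :
    steenrodP K q n k (monomial m 1) = steenrodMonomial q k m := by
  simp only [steenrodP, LinearMap.sum_apply, LinearMap.comp_apply, LinearMap.add_apply,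
    LinearMap.smul_apply, LinearMap.mulLeft_apply, LinearMap.id_apply, Derivation.coeFn_coe,
    X_mul_pderiv_monomial, steenrodMonomial]
  refine Finset.sum_congr rfl fun i _ => ?_
  simp only [smul_monomial]
  rw [X_pow_eq_monomial, ← (monomial m).map_add, monomial_mul,
    add_comm (Finsupp.single i k)]
  congr 1
  simp only [nsmul_eq_mul, smul_eq_mul]
  ring

lemma span_steenrodHits_le_qHit (q : K) (d : ℕ) :
    Submodule.span K (steenrodHits (Fin n) q d) ≤ qHit K q n := by
  rw [Submodule.span_le]
  rintro _ ⟨k, m, hk, -, rfl⟩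
  exact Submodule.subset_span
    (Set.mem_biUnion (x := k) hk ⟨monomial m 1, steenrodP_monomial_one q k m⟩)

lemma isQHarmonic_zero_iff {s : MvPolynomial (Fin n) K} :
    IsQHarmonic 0 s ↔ s ∈ harmonics K (Fin n) := by
  have hdual : ∀ k, steenrodPdual K 0 n k = powerSumPderiv K (Fin n) k := fun k => by
    simp [steenrodPdual, powerSumPderiv]
  simp only [IsQHarmonic, hdual, mem_harmonics]

end SteenrodOperator

section FischerForm

variable {K : Type} [Field K] {n : ℕ}

lemma formB_eq_sum_of_support_subset {p r : MvPolynomial (Fin n) K} {s : Finset (Fin n →₀ ℕ)}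
    (hs : p.support ⊆ s) :
    formB p r = ∑ m ∈ s, (∏ i, ((m i).factorial : K)) * p.coeff m * r.coeff m :=
  Finset.sum_subset hs fun m _ hm => by rw [notMem_support_iff.mp hm]; ring

lemma formB_comm (p r : MvPolynomial (Fin n) K) : formB p r = formB r p := by
  rw [formB_eq_sum_of_support_subset (s := p.support ∪ r.support) Finset.subset_union_left,
    formB_eq_sum_of_support_subset (s := p.support ∪ r.support) Finset.subset_union_right]
  exact Finset.sum_congr rfl fun m _ => by ring

lemma formB_add_right (p r₁ r₂ : MvPolynomial (Fin n) K) :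
    formB p (r₁ + r₂) = formB p r₁ + formB p r₂ := by
  simp only [formB, coeff_add, mul_add, Finset.sum_add_distrib]

lemma formB_smul_right (c : K) (p r : MvPolynomial (Fin n) K) :
    formB p (c • r) = c * formB p r := by
  simp only [formB, coeff_smul, smul_eq_mul, Finset.mul_sum]
  exact Finset.sum_congr rfl fun m _ => by ring

noncomputable def fischerForm : LinearMap.BilinForm K (MvPolynomial (Fin n) K) :=
  LinearMap.mk₂ K formB
    (fun p₁ p₂ r => by simp only [formB_comm _ r, formB_add_right])
    (fun c p r => by simp only [formB_comm _ r, formB_smul_right, smul_eq_mul])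
    formB_add_right formB_smul_right

lemma fischerForm_apply (p r : MvPolynomial (Fin n) K) : fischerForm p r = formB p r := rfl

lemma formB_monomial_one_left (m : Fin n →₀ ℕ) (r : MvPolynomial (Fin n) K) :
    formB (monomial m 1) r = (∏ i, ((m i).factorial : K)) * r.coeff m := by
  rw [formB_eq_sum_of_support_subset support_monomial_subset, Finset.sum_singleton,
    coeff_monomial, if_pos rfl, mul_one]

lemma prod_factorial_add_single_one (m : Fin n →₀ ℕ) (i : Fin n) :
    ∏ j, ((m + Finsupp.single i 1 : Fin n →₀ ℕ) j).factorial =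
      (m i + 1) * ∏ j, (m j).factorial := by
  rw [← Finset.mul_prod_erase _ _ (Finset.mem_univ i),
    ← Finset.mul_prod_erase _ _ (Finset.mem_univ i), ← mul_assoc, Finsupp.add_apply,
    Finsupp.single_eq_same, ← Nat.factorial_succ]
  congr 1
  exact Finset.prod_congr rfl fun j hj => by
    rw [Finsupp.add_apply, Finsupp.single_eq_of_ne (Finset.ne_of_mem_erase hj), add_zero]

lemma formB_mul_X (i : Fin n) (f g : MvPolynomial (Fin n) K) :
    formB (f * X i) g = formB f (pderiv i g) := by
  rw [formB, support_mul_X, Finset.sum_map]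
  refine Finset.sum_congr rfl fun m _ => ?_
  simp only [addRightEmbedding_apply, coeff_mul_X, coeff_pderiv]
  rw [← Nat.cast_prod, prod_factorial_add_single_one]
  push_cast
  ring

lemma formB_mul_X_pow (i : Fin n) (k : ℕ) (f g : MvPolynomial (Fin n) K) :
    formB (f * X i ^ k) g = formB f (((pderiv i).toLinearMap ^ k) g) := by
  induction k generalizing g with
  | zero => rw [pow_zero, pow_zero, mul_one, Module.End.one_apply]
  | succ k ih =>
    rw [pow_succ, ← mul_assoc, formB_mul_X, ih, pow_succ, Module.End.mul_apply,
      Derivation.coeFn_coe]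

lemma formB_steenrodMonomial_zero (k : ℕ) (m : Fin n →₀ ℕ) (g : MvPolynomial (Fin n) K) :
    formB (steenrodMonomial 0 k m) g =
      (∏ i, ((m i).factorial : K)) * coeff m (powerSumPderiv K (Fin n) k g) := by
  rw [← formB_monomial_one_left, powerSumPderiv_apply, ← fischerForm_apply, ← fischerForm_apply,
    steenrodMonomial_zero, map_sum, LinearMap.sum_apply, map_sum]
  simp only [fischerForm_apply, formB_mul_X_pow]

lemma fischerForm_restrict_isRefl (W : Submodule K (MvPolynomial (Fin n) K)) :
    (fischerForm.restrict W).IsRefl := fun x y h => by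
  change formB _ _ = 0 at h ⊢
  rwa [formB_comm]

lemma fischerForm_restrict_nondegenerate [CharZero K] (s : Set (Fin n →₀ ℕ)) :
    (fischerForm.restrict (restrictSupport K s)).Nondegenerate := by
  refine (LinearMap.IsRefl.nondegenerate_iff_separatingLeft
    (fischerForm_restrict_isRefl (restrictSupport K s))).mpr fun x hx => ?_
  ext1
  refine ext _ _ fun m => by_contra fun hm => ?_
  have hmem : monomial m (1 : K) ∈ restrictSupport K s :=
    (monomial_mem_restrictSupport K).mpr (.inl (x.2 (mem_support_iff.mpr hm)))
  have h0 := hx ⟨_, hmem⟩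
  change formB (x : MvPolynomial (Fin n) K) (monomial m 1) = 0 at h0
  rw [formB_comm, formB_monomial_one_left] at h0
  exact hm (by simpa [Finset.prod_eq_zero_iff, Nat.factorial_ne_zero] using h0)

lemma mem_harmonics_of_forall_formB_steenrodHits_eq_zero [CharZero K] {d : ℕ}
    {v : MvPolynomial (Fin n) K} (hv : v.totalDegree ≤ d)
    (h : ∀ f ∈ steenrodHits (Fin n) (0 : K) d, formB f v = 0) :
    v ∈ harmonics K (Fin n) := by
  refine mem_harmonics.mpr fun k hk => ext _ _ fun m => ?_
  rw [coeff_zero]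
  by_cases hkm : m.degree + k ≤ d
  · have h0 := h _ ⟨k, m, hk, hkm, rfl⟩
    rw [formB_steenrodMonomial_zero] at h0
    exact (mul_eq_zero.mp h0).resolve_left
      (Finset.prod_ne_zero_iff.mpr fun i _ => Nat.cast_ne_zero.mpr (Nat.factorial_ne_zero _))
  · exact coeff_powerSumPderiv_eq_zero (by omega)

end FischerForm

section Classical

variable {𝕜 : Type} [RCLike 𝕜] {n : ℕ}

lemma eq_zero_of_formB_map_conj_self_eq_zero {v : MvPolynomial (Fin n) 𝕜}
    (h : formB v (map (starRingEnd 𝕜) v) = 0) : v = 0 := by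
  have hterm : ∀ m, (∏ i, ((m i).factorial : 𝕜)) * v.coeff m *
      (map (starRingEnd 𝕜) v).coeff m =
        (((∏ i, (m i).factorial : ℕ) * ‖v.coeff m‖ ^ 2 : ℝ) : 𝕜) := fun m => by
    rw [coeff_map, mul_assoc, RCLike.mul_conj]
    push_cast
    ring
  simp only [formB, hterm, ← RCLike.ofReal_sum, RCLike.ofReal_eq_zero] at h
  rw [Finset.sum_eq_zero_iff_of_nonneg fun m _ => by positivity] at h
  refine ext _ _ fun m => ?_
  rw [coeff_zero]
  by_contra hm
  have h0 := h m (mem_support_iff.mpr hm)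
  exact hm (by simpa [Finset.prod_eq_zero_iff, Nat.factorial_ne_zero] using h0)

theorem restrictTotalDegree_le_span_steenrodHits_sup_harmonics (d : ℕ) :
    restrictTotalDegree (Fin n) 𝕜 d ≤ Submodule.span 𝕜 (steenrodHits (Fin n) (0 : 𝕜) d) ⊔
      (harmonics 𝕜 (Fin n) ⊓ restrictTotalDegree (Fin n) 𝕜 d) := by
  set W := restrictTotalDegree (Fin n) 𝕜 d
  set T := Submodule.span 𝕜 (steenrodHits (Fin n) (0 : 𝕜) d) ⊔ (harmonics 𝕜 (Fin n) ⊓ W)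
  set B := fischerForm.restrict W
  suffices hT : B.orthogonal (T.comap W.subtype) = ⊥ by
    intro p hp
    have htop := B.orthogonal_orthogonal (fischerForm_restrict_nondegenerate _)
      (fischerForm_restrict_isRefl W) (T.comap W.subtype)
    rw [hT, LinearMap.BilinForm.orthogonal_bot] at htop
    exact (htop ▸ Submodule.mem_top : (⟨p, hp⟩ : W) ∈ T.comap W.subtype)
  refine (Submodule.eq_bot_iff _).mpr fun v hv => ?_
  have hvW : (v : MvPolynomial (Fin n) 𝕜) ∈ W := v.2
  have hharm : (v : MvPolynomial (Fin n) 𝕜) ∈ harmonics 𝕜 (Fin n) :=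
    mem_harmonics_of_forall_formB_steenrodHits_eq_zero ((mem_restrictTotalDegree _ _ _).mp hvW)
      fun f hf => hv ⟨f, steenrodHits_subset_restrictTotalDegree _ _ hf⟩
        (Submodule.mem_sup_left (Submodule.subset_span hf))
  have hconjW := map_mem_restrictTotalDegree (starRingEnd 𝕜) hvW
  have hconj := hv ⟨_, hconjW⟩
    (Submodule.mem_sup_right ⟨map_mem_harmonics _ hharm, hconjW⟩)
  change formB _ _ = 0 at hconj
  exact Subtype.ext (eq_zero_of_formB_map_conj_self_eq_zero (by rwa [formB_comm]))

end Classical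

section Specialization

open scoped Polynomial
open Polynomial (evalRingHom)

lemma map_smul_eq_smul_map {R S σ : Type*} [CommSemiring R] [CommSemiring S] (φ : R →+* S)
    (c : R) (f : MvPolynomial σ R) : map φ (c • f) = φ c • map φ f := by
  rw [smul_eq_C_mul, smul_eq_C_mul, map_mul, map_C]

theorem linearIndependent_of_linearIndependent_map_eval_zero {F σ ι : Type*} [Field F]
    [Fintype ι] {w : ι → MvPolynomial σ F[X]}
    (h : LinearIndependent F fun j => map (evalRingHom 0) (w j)) :
    LinearIndependent F[X] w := by
  classical
  rw [Fintype.linearIndependent_iff] at h ⊢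
  intro a ha
  by_contra! ⟨j, hj⟩
  -- Dividing the relation by the gcd of its coefficients makes its value at `0` nontrivial.
  obtain ⟨b, hab, hb⟩ := Finset.extract_gcd a ⟨j, Finset.mem_univ j⟩
  have hgcd : Finset.univ.gcd a ≠ 0 := fun h0 =>
    hj (Finset.gcd_eq_zero_iff.mp h0 j (Finset.mem_univ j))
  have hrel : ∑ i, b i • w i = 0 := by
    refine (smul_eq_zero.mp ?_).resolve_left hgcd
    rw [Finset.smul_sum, ← ha]
    exact Finset.sum_congr rfl fun i _ => by rw [smul_smul, ← hab i (Finset.mem_univ i)]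
  have hb0 : ∀ i, evalRingHom 0 (b i) = 0 := h _ <| by
    simp only [← map_smul_eq_smul_map, ← map_sum, hrel, map_zero]
  have hX : Polynomial.X ∣ Finset.univ.gcd b := Finset.dvd_gcd fun i _ =>
    Polynomial.X_dvd_iff.mpr (by rw [Polynomial.coeff_zero_eq_eval_zero]; exact hb0 i)
  rw [hb] at hX
  exact Polynomial.not_isUnit_X (isUnit_of_dvd_one hX)

theorem linearIndependent_map_algebraMap {R K σ ι : Type*} [CommRing R] [IsDomain R] [Field K]
    [Algebra R K] [IsFractionRing R K] {w : ι → MvPolynomial σ R} (h : LinearIndependent R w) :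
    LinearIndependent K fun j => map (algebraMap R K) (w j) := by
  rw [← LinearIndependent.iff_fractionRing R K]
  exact h.map' (mapAlgHom (Algebra.ofId R K)).toLinearMap
    (LinearMap.ker_eq_bot.mpr (map_injective _ (IsFractionRing.injective R K)))

lemma finrank_restrictTotalDegree (σ R : Type*) [CommRing R] [Nontrivial R] (d : ℕ) :
    Module.finrank R (restrictTotalDegree σ R d) =
      Nat.card {m : σ →₀ ℕ | (m.sum fun _ e => e) ≤ d} :=
  Module.finrank_eq_nat_card_basis (basisRestrictSupport R _)

theorem restrictTotalDegree_le_span_image_map_algebraMap {F σ : Type*} [Field F] [Finite σ]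
    {d : ℕ} {S : Set (MvPolynomial σ F[X])} (hS : S ⊆ restrictTotalDegree σ F[X] d)
    (h : restrictTotalDegree σ F d ≤ Submodule.span F (map (evalRingHom 0) '' S)) :
    restrictTotalDegree σ (RatFunc F) d ≤
      Submodule.span (RatFunc F) (map (algebraMap F[X] (RatFunc F)) '' S) := by
  obtain ⟨κ, a, -, hspan, hli⟩ :=
    exists_linearIndependent' F fun s : S => map (evalRingHom 0) s.1
  simp only [Function.comp_def] at hspan hli
  have hW : Submodule.span F (Set.range fun j => map (evalRingHom 0) (a j).1) =
      restrictTotalDegree σ F d := by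
    refine le_antisymm (Submodule.span_le.mpr ?_) ?_
    · rintro _ ⟨j, rfl⟩
      exact map_mem_restrictTotalDegree _ (hS (a j).2)
    · rwa [hspan, ← Set.image_eq_range]
  have : Module.Finite F (Submodule.span F (Set.range fun j => map (evalRingHom 0) (a j).1)) := by
    rw [hW]; infer_instance
  have := Module.Finite.finite_basis (Module.Basis.span hli)
  have := Fintype.ofFinite κ
  have hliK := linearIndependent_map_algebraMap (K := RatFunc F)
    (linearIndependent_of_linearIndependent_map_eval_zero hli)
  have hle : Submodule.span (RatFunc F)
      (Set.range fun j => map (algebraMap F[X] (RatFunc F)) (a j).1) ≤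
        restrictTotalDegree σ (RatFunc F) d :=
    Submodule.span_le.mpr fun _ ⟨j, hj⟩ => hj ▸ map_mem_restrictTotalDegree _ (hS (a j).2)
  have hrank := finrank_span_eq_card hli
  rw [hW, finrank_restrictTotalDegree, ← finrank_restrictTotalDegree σ (RatFunc F)] at hrank
  rw [← Submodule.eq_of_le_of_finrank_eq hle ((finrank_span_eq_card hliK).trans hrank.symm)]
  exact Submodule.span_mono fun _ ⟨j, hj⟩ => ⟨(a j).1, (a j).2, hj⟩

end Specialization

theorem restrictTotalDegree_le_span_steenrodHits_X_sup_harmonics {𝕜 : Type} [RCLike 𝕜] {n : ℕ}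
    (d : ℕ) :
    restrictTotalDegree (Fin n) (RatFunc 𝕜) d ≤
      Submodule.span (RatFunc 𝕜) (steenrodHits (Fin n) RatFunc.X d) ⊔
        harmonics (RatFunc 𝕜) (Fin n) := by
  set H := harmonics 𝕜 (Fin n) ⊓ restrictTotalDegree (Fin n) 𝕜 d
  set S : Set (MvPolynomial (Fin n) (Polynomial 𝕜)) :=
    steenrodHits (Fin n) Polynomial.X d ∪ map Polynomial.C '' H
  have hS : S ⊆ restrictTotalDegree (Fin n) (Polynomial 𝕜) d :=
    Set.union_subset (steenrodHits_subset_restrictTotalDegree _ _)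
      (Set.image_subset_iff.mpr fun f hf => map_mem_restrictTotalDegree _ hf.2)
  have hS₀ : map (Polynomial.evalRingHom 0) '' S = steenrodHits (Fin n) 0 d ∪ H := by
    have hC : (Polynomial.evalRingHom (0 : 𝕜)).comp Polynomial.C = RingHom.id 𝕜 :=
      Polynomial.eval₂RingHom_comp_C _ _
    rw [Set.image_union, image_map_steenrodHits, Set.image_image]
    simp only [map_map, hC, map_id, Set.image_id', Polynomial.coe_evalRingHom, Polynomial.eval_X]
  have hSK : map (algebraMap (Polynomial 𝕜) (RatFunc 𝕜)) '' S =
      steenrodHits (Fin n) RatFunc.X d ∪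
        map ((algebraMap (Polynomial 𝕜) (RatFunc 𝕜)).comp Polynomial.C) '' H := by
    rw [Set.image_union, image_map_steenrodHits, RatFunc.algebraMap_X, Set.image_image]
    simp only [map_map]
  refine (restrictTotalDegree_le_span_image_map_algebraMap hS ?_).trans ?_
  · rw [hS₀, Submodule.span_union, Submodule.span_eq]
    exact restrictTotalDegree_le_span_steenrodHits_sup_harmonics d
  · rw [hSK, Submodule.span_union]
    refine sup_le_sup_left (Submodule.span_le.mpr ?_) _
    exact Set.image_subset_iff.mpr fun f hf => map_mem_harmonics _ hf.1

end QSteenrod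

open QSteenrod in
theorem qHit_add_classicalHarmonic_eq_top_general (n : ℕ)
    (p : MvPolynomial (Fin n) (RatFunc ℂ)) :
    ∃ h ∈ qHit (RatFunc ℂ) RatFunc.X n,
      ∃ s : MvPolynomial (Fin n) (RatFunc ℂ),
        IsQHarmonic (0 : RatFunc ℂ) s ∧ p = h + s := by
  have hp : p ∈ restrictTotalDegree (Fin n) (RatFunc ℂ) p.totalDegree :=
    (mem_restrictTotalDegree _ _ _).mpr le_rfl
  obtain ⟨h, hh, s, hs, rfl⟩ :=
    Submodule.mem_sup.mp (restrictTotalDegree_le_span_steenrodHits_X_sup_harmonics _ hp)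
  exact ⟨h, span_steenrodHits_le_qHit _ _ hh, s, isQHarmonic_zero_iff.mpr hs, rfl⟩

/-- Over `K = ℂ(q)` with `q` the indeterminate, every polynomial is the
sum of a `q`-hit polynomial and a classical-harmonic (i.e. `0`-harmonic) polynomial. -/
theorem qHit_add_classicalHarmonic_eq_top (n : ℕ) (hn : 1 ≤ n)
    (p : MvPolynomial (Fin n) (RatFunc ℂ)) :
    ∃ h ∈ qHit (RatFunc ℂ) RatFunc.X n,
      ∃ s : MvPolynomial (Fin n) (RatFunc ℂ),
        IsQHarmonic (0 : RatFunc ℂ) s ∧ p = h + s :=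
  qHit_add_classicalHarmonic_eq_top_general n p
end

section
/- Let K be a field of characteristic zero, q ∈ K, and n ≥ 0. Let f ∈ K[x_1,…,x_n,y] be a polynomial in n+1 variables, and for i ≥ 0 let f_i := i!·c_i ∈ K[x_1,…,x_n], where c_i is the coefficient of y^i when f is written as a polynomial in y with coefficients in K[x_1,…,x_n]. Then f is q-harmonic in the n+1 variables x_1,…,x_n,y if and only if for all i ≥ 0 and all k ≥ 1 one has P_k^*(f_i) = −(1 + q·i)·f_{i+k}, where P_k^* is the dual q-Steenrod operator in the n variables x_1,…,x_n. -/
open MvPolynomial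

namespace QSteenrodAux

variable {K : Type} [Field K] {n : ℕ}

theorem fse_pderiv_zero (p : MvPolynomial (Fin (n + 1)) K) :
    finSuccEquiv K n (pderiv 0 p) = Polynomial.derivative (finSuccEquiv K n p) := by
  induction p using MvPolynomial.induction_on with
  | C a => simp [finSuccEquiv_apply]
  | add p r hp hr => simp [hp, hr]
  | mul_X p j hp =>
    cases j using Fin.cases with
    | zero =>
      rw [pderiv_mul, pderiv_X_self, mul_one, map_add, map_mul, hp, finSuccEquiv_X_zero,
        map_mul, finSuccEquiv_X_zero, Polynomial.derivative_mul, Polynomial.derivative_X, mul_one]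
    | succ j =>
      rw [pderiv_mul, pderiv_X_of_ne (Fin.succ_ne_zero j), mul_zero, add_zero, map_mul,
        hp, finSuccEquiv_X_succ, map_mul, finSuccEquiv_X_succ, Polynomial.derivative_mul,
        Polynomial.derivative_C, mul_zero, add_zero]

theorem coeff_fse_pderiv_succ (j : Fin n) (p : MvPolynomial (Fin (n + 1)) K) (i : ℕ) :
    (finSuccEquiv K n (pderiv j.succ p)).coeff i =
      pderiv j ((finSuccEquiv K n p).coeff i) := by
  induction p using MvPolynomial.induction_on generalizing i with
  | C a => simp [finSuccEquiv_apply, Polynomial.coeff_C, apply_ite (pderiv j)]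
  | add p r hp hr => simp [hp, hr]
  | mul_X p l hp =>
    cases l using Fin.cases with
    | zero =>
      rw [pderiv_mul, pderiv_X_of_ne (Fin.succ_ne_zero j).symm, mul_zero, add_zero, map_mul,
        finSuccEquiv_X_zero, map_mul, finSuccEquiv_X_zero]
      cases i with
      | zero => simp
      | succ i => simp [Polynomial.coeff_mul_X, hp]
    | succ l =>
      rw [pderiv_mul, map_add, map_mul, map_mul, finSuccEquiv_X_succ, map_mul, finSuccEquiv_X_succ]
      rcases eq_or_ne l j with rfl | hlj
      · rw [pderiv_X_self]
        simp [Polynomial.coeff_mul_C, hp, pderiv_mul]; ring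
      · rw [pderiv_X_of_ne (fun h => hlj (Fin.succ_injective n h))]
        simp [Polynomial.coeff_mul_C, hp, pderiv_mul, pderiv_X_of_ne hlj]; ring

theorem fse_pow_pderiv_zero (k : ℕ) (p : MvPolynomial (Fin (n + 1)) K) :
    finSuccEquiv K n
        ((((pderiv (0 : Fin (n + 1))).toLinearMap :
            Module.End K (MvPolynomial (Fin (n + 1)) K)) ^ k) p) =
      Polynomial.derivative^[k] (finSuccEquiv K n p) := by
  induction k generalizing p with
  | zero => simp
  | succ k ih =>
    rw [pow_succ, Module.End.mul_apply]
    simp only [Derivation.coeFn_coe]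
    rw [ih, fse_pderiv_zero, ← Function.iterate_succ_apply, Function.iterate_succ,
      Function.comp_apply]

theorem coeff_fse_pow_pderiv_succ (j : Fin n) (k i : ℕ) (p : MvPolynomial (Fin (n + 1)) K) :
    (finSuccEquiv K n
        ((((pderiv j.succ).toLinearMap :
            Module.End K (MvPolynomial (Fin (n + 1)) K)) ^ k) p)).coeff i =
      (((pderiv j).toLinearMap : Module.End K (MvPolynomial (Fin n) K)) ^ k)
        ((finSuccEquiv K n p).coeff i) := by
  induction k generalizing p with
  | zero => simp
  | succ k ih =>
    rw [pow_succ, Module.End.mul_apply, pow_succ, Module.End.mul_apply]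
    simp only [Derivation.coeFn_coe]
    rw [ih, coeff_fse_pderiv_succ]

theorem key (q : K) (k i : ℕ) (f : MvPolynomial (Fin (n + 1)) K) :
    (finSuccEquiv K n (steenrodPdual K q (n + 1) k f)).coeff i =
      steenrodPdual K q n k ((finSuccEquiv K n f).coeff i)
        + ((((i + k).descFactorial k : K)) * (1 + q * (i : K))) •
            (finSuccEquiv K n f).coeff (i + k) := by
  rw [steenrodPdual, LinearMap.sum_apply, map_sum, Polynomial.finset_sum_coeff,
    Fin.sum_univ_succ]
  conv_rhs => rw [add_comm]
  congr 1
  · -- the distinguished-variable term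
    rw [LinearMap.add_apply, LinearMap.smul_apply, LinearMap.comp_apply, LinearMap.mulLeft_apply,
      map_add, map_smul, map_mul, finSuccEquiv_X_zero, fse_pow_pderiv_zero, fse_pow_pderiv_zero,
      Polynomial.coeff_add, Polynomial.coeff_smul, Polynomial.coeff_iterate_derivative]
    cases i with
    | zero =>
      rw [Polynomial.coeff_X_mul_zero]
      match_scalars
      ring
    | succ i =>
      rw [Polynomial.coeff_X_mul, Polynomial.coeff_iterate_derivative]
      have hd : (i + (k + 1)).descFactorial (k + 1) = (i + 1) * (i + 1 + k).descFactorial k := by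
        rw [show i + (k + 1) = i + 1 + k by ring, Nat.descFactorial_succ, Nat.add_sub_cancel]
      rw [hd, show i + (k + 1) = i + 1 + k by ring]
      match_scalars
      ring
  · -- the remaining variables
    rw [steenrodPdual, LinearMap.sum_apply]
    refine Finset.sum_congr rfl fun j _ => ?_
    rw [LinearMap.add_apply, LinearMap.smul_apply, LinearMap.comp_apply, LinearMap.mulLeft_apply,
      map_add, map_smul, map_mul, finSuccEquiv_X_succ, Polynomial.coeff_add,
      Polynomial.coeff_smul, Polynomial.coeff_C_mul, coeff_fse_pow_pderiv_succ,
      coeff_fse_pow_pderiv_succ, LinearMap.add_apply, LinearMap.smul_apply,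
      LinearMap.comp_apply, LinearMap.mulLeft_apply]

end QSteenrodAux


/-- Writing `f ∈ K[x_1,…,x_n,y]` as `f = ∑_i (f_i / i!) y^i` with
`f_i = i! ⬝ c_i ∈ K[x_1,…,x_n]` (here `y` is the distinguished variable split off by
`finSuccEquiv`), `f` is `q`-harmonic in the `n+1` variables iff
`P_k^*(f_i) = −(1 + q i) f_{i+k}` for all `i ≥ 0`, `k ≥ 1`. -/
theorem isQHarmonic_iff_string (K : Type) [Field K] [CharZero K] (q : K) (n : ℕ)
    (f : MvPolynomial (Fin (n + 1)) K) :
    IsQHarmonic q f ↔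
      ∀ (i k : ℕ), 1 ≤ k →
        steenrodPdual K q n k
            ((i.factorial : K) • Polynomial.coeff (finSuccEquiv K n f) i)
          = -((1 + q * (i : K)) •
              (((i + k).factorial : K) • Polynomial.coeff (finSuccEquiv K n f) (i + k))) := by
  have hfac : ∀ i k : ℕ,
      (i.factorial : K) * ((i + k).descFactorial k : K) = ((i + k).factorial : K) := by
    intro i k
    rw [← Nat.cast_mul]
    congr 1
    simpa [Nat.add_sub_cancel] using Nat.factorial_mul_descFactorial (Nat.le_add_left k i)
  have hiff : ∀ k : ℕ, steenrodPdual K q (n + 1) k f = 0 ↔ ∀ i : ℕ,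
      steenrodPdual K q n k ((finSuccEquiv K n f).coeff i)
        = -((((i + k).descFactorial k : K)) * (1 + q * (i : K))) •
            (finSuccEquiv K n f).coeff (i + k) := by
    intro k
    rw [← EmbeddingLike.map_eq_zero_iff (f := finSuccEquiv K n), Polynomial.ext_iff]
    refine forall_congr' fun i => ?_
    rw [QSteenrodAux.key q k i f, Polynomial.coeff_zero, add_eq_zero_iff_eq_neg, ← neg_smul]
  constructor
  · intro hf i k hk
    have hI := (hiff k).mp (hf k hk) i
    rw [map_smul, hI]
    match_scalars
    linear_combination (-(1 + q * (i : K))) * hfac i k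
  · intro h k hk
    rw [hiff k]
    intro i
    have hI := h i k hk
    rw [map_smul] at hI
    have hne : (i.factorial : K) ≠ 0 := Nat.cast_ne_zero.mpr (Nat.factorial_ne_zero i)
    refine smul_right_injective (MvPolynomial (Fin n) K) hne ?_
    dsimp only
    rw [hI]
    match_scalars
    linear_combination (1 + q * (i : K)) * hfac i k
end

section
/- Let K be a field of characteristic zero, q ∈ K, and n ≥ 0. Let f ∈ K[x_1,…,x_n,y] be a nonzero polynomial that is q-harmonic in the n+1 variables x_1,…,x_n,y, and let d be the degree of f in the variable y. Then the coefficient of y^d in f (an element of K[x_1,…,x_n]) is q-harmonic in the n variables x_1,…,x_n. -/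
open MvPolynomial

/-!
Write `f = ∑ₑ fₑ yᵉ` with `fₑ ∈ K[x₁,…,xₙ]`. The `xᵢ`-summands of `P_k^*` act on the coefficients
`fₑ` separately, while the `y`-summand `∂ʸ^k + q y ∂ʸ^{k+1}` lowers the `y`-degree by `k`. So for
`k ≥ 1` the coefficient of `y^d`, `d = deg_y f`, in `P_k^* f` is exactly `P_k^* f_d`.
-/

namespace Finsupp

variable {M : Type*} [AddCommMonoid M] {n : ℕ}

lemma cons_add_single_zero (y z : M) (s : Fin n →₀ M) :
    cons y s + single 0 z = cons (y + z) s := by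
  ext j
  refine Fin.cases ?_ (fun j => ?_) j <;> simp

lemma cons_add_single_succ (y z : M) (i : Fin n) (s : Fin n →₀ M) :
    cons y s + single i.succ z = cons y (s + single i z) := by
  ext j
  refine Fin.cases ?_ (fun j => ?_) j <;> simp [single_apply, Fin.succ_ne_zero]

end Finsupp

namespace MvPolynomial

variable {R : Type*} [CommSemiring R] {n : ℕ}

lemma finSuccEquiv_pderiv_zero (p : MvPolynomial (Fin (n + 1)) R) :
    finSuccEquiv R n (pderiv 0 p) = Polynomial.derivative (finSuccEquiv R n p) := by
  ext e m
  rw [finSuccEquiv_coeff_coeff, coeff_pderiv, Polynomial.coeff_derivative,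
    Finsupp.cons_add_single_zero, Finsupp.cons_zero, ← Nat.cast_add_one, ← Nat.cast_add_one,
    ← C_eq_coe_nat, mul_comm _ (C _), coeff_C_mul, finSuccEquiv_coeff_coeff, mul_comm]

lemma coeff_finSuccEquiv_pderiv_succ (i : Fin n) (p : MvPolynomial (Fin (n + 1)) R) (e : ℕ) :
    (finSuccEquiv R n (pderiv i.succ p)).coeff e = pderiv i ((finSuccEquiv R n p).coeff e) := by
  ext m
  rw [finSuccEquiv_coeff_coeff, coeff_pderiv, coeff_pderiv, Finsupp.cons_add_single_succ,
    Finsupp.cons_succ, finSuccEquiv_coeff_coeff]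

lemma finSuccEquiv_iterate_pderiv_zero (p : MvPolynomial (Fin (n + 1)) R) (k : ℕ) :
    finSuccEquiv R n ((pderiv 0)^[k] p) = Polynomial.derivative^[k] (finSuccEquiv R n p) :=
  Function.Semiconj.iterate_right (f := finSuccEquiv R n) finSuccEquiv_pderiv_zero k p

lemma coeff_finSuccEquiv_iterate_pderiv_succ (i : Fin n) (p : MvPolynomial (Fin (n + 1)) R)
    (k e : ℕ) :
    (finSuccEquiv R n ((pderiv i.succ)^[k] p)).coeff e =
      (pderiv i)^[k] ((finSuccEquiv R n p).coeff e) :=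
  Function.Semiconj.iterate_right (f := fun p => (finSuccEquiv R n p).coeff e)
    (fun p => coeff_finSuccEquiv_pderiv_succ i p e) k p

end MvPolynomial

namespace Polynomial

variable {R : Type*} [Semiring R]

lemma coeff_iterate_derivative_eq_zero {p : R[X]} {k e : ℕ} (h : p.natDegree < e + k) :
    (derivative^[k] p).coeff e = 0 := by
  rw [coeff_iterate_derivative, coeff_eq_zero_of_natDegree_lt h, smul_zero]

lemma coeff_X_mul_iterate_derivative_eq_zero {p : R[X]} {k e : ℕ} (h : p.natDegree < e + k) :
    (X * derivative^[k + 1] p).coeff e = 0 := by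
  cases e with
  | zero => exact coeff_X_mul_zero _
  | succ e => exact (coeff_X_mul _ e).trans (coeff_iterate_derivative_eq_zero (by omega))

end Polynomial

lemma steenrodPdual_apply (K : Type) [Field K] (q : K) (n k : ℕ) (p : MvPolynomial (Fin n) K) :
    steenrodPdual K q n k p = ∑ i, ((pderiv i)^[k] p + q • (X i * (pderiv i)^[k + 1] p)) := by
  simp [steenrodPdual, Module.End.pow_apply]

lemma coeff_finSuccEquiv_steenrodPdual (K : Type) [Field K] (q : K) (n k : ℕ)
    (p : MvPolynomial (Fin (n + 1)) K) (e : ℕ) :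
    (finSuccEquiv K n (steenrodPdual K q (n + 1) k p)).coeff e =
      (Polynomial.derivative^[k] (finSuccEquiv K n p)).coeff e +
        q • (Polynomial.X * Polynomial.derivative^[k + 1] (finSuccEquiv K n p)).coeff e +
      steenrodPdual K q n k ((finSuccEquiv K n p).coeff e) := by
  simp only [steenrodPdual_apply, Fin.sum_univ_succ, map_add, map_sum, map_smul,
    Polynomial.coeff_add, Polynomial.finsetSum_coeff, Polynomial.coeff_smul, map_mul,
    finSuccEquiv_X_zero, finSuccEquiv_X_succ, Polynomial.coeff_C_mul,
    finSuccEquiv_iterate_pderiv_zero, coeff_finSuccEquiv_iterate_pderiv_succ]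

theorem leadingCoeff_of_qHarmonic_isQHarmonic_general (K : Type) [Field K] (q : K)
    (n : ℕ) (f : MvPolynomial (Fin (n + 1)) K)
    (hharm : IsQHarmonic q f) :
    IsQHarmonic q (Polynomial.coeff (finSuccEquiv K n f) (f.degreeOf 0)) := by
  intro k hk
  set g := finSuccEquiv K n f
  calc steenrodPdual K q n k (g.coeff (f.degreeOf 0))
      = (finSuccEquiv K n (steenrodPdual K q (n + 1) k f)).coeff g.natDegree := by
        rw [coeff_finSuccEquiv_steenrodPdual,
          Polynomial.coeff_iterate_derivative_eq_zero (Nat.lt_add_of_pos_right hk),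
          Polynomial.coeff_X_mul_iterate_derivative_eq_zero (Nat.lt_add_of_pos_right hk),
          smul_zero, zero_add, zero_add, natDegree_finSuccEquiv]
    _ = 0 := by rw [hharm k hk, map_zero, Polynomial.coeff_zero]

/-- If `f ∈ K[x_1,…,x_n,y]` is a nonzero `q`-harmonic polynomial in
`n+1` variables and `d` is its degree in the distinguished variable `y`, then the
coefficient of `y^d` in `f` is `q`-harmonic in the remaining `n` variables. -/
theorem leadingCoeff_of_qHarmonic_isQHarmonic (K : Type) [Field K] [CharZero K] (q : K)
    (n : ℕ) (f : MvPolynomial (Fin (n + 1)) K) (hf : f ≠ 0)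
    (hharm : IsQHarmonic q f) :
    IsQHarmonic q (Polynomial.coeff (finSuccEquiv K n f) (f.degreeOf 0)) :=
  leadingCoeff_of_qHarmonic_isQHarmonic_general K q n f hharm
end

section
/- Let K be a field of characteristic zero, q ∈ K, and n ≥ 1. Let (f_i)_{i∈ℕ} be a harmonic string in K[x_1,…,x_n], i.e. a family of polynomials satisfying P_k^*(f_i) = −(1 + q·i)·f_{i+k} for all i ≥ 0 and k ≥ 1, with f_0 ≠ 0, and let ℓ := max{i : f_i ≠ 0} (this maximum exists, since the relations force f_i = 0 for i exceeding the degree of f_0). Then: (a) the head f_ℓ is q-harmonic, i.e. P_k^*(f_ℓ) = 0 for all k ≥ 1; and (b) for every i with 0 ≤ i ≤ ℓ such that 1 + q·i ≠ 0, one has f_i ≠ 0. -/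
open MvPolynomial

/-- Let `(f_i)` be a harmonic string in `K[x_1,…,x_n]`, i.e.
`P_k^*(f_i) = −(1 + q i) f_{i+k}` for all `i ≥ 0`, `k ≥ 1`, with `f_0 ≠ 0`, and let `ℓ`
be the largest index with `f_ℓ ≠ 0`. Then (a) the head `f_ℓ` is `q`-harmonic, and
(b) `f_i ≠ 0` for every `i ≤ ℓ` with `1 + q i ≠ 0`. -/
theorem harmonicString_head_and_nonvanishing (K : Type) [Field K] [CharZero K] (q : K)
    (n : ℕ) (hn : 1 ≤ n) (f : ℕ → MvPolynomial (Fin n) K)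
    (hstr : ∀ (i k : ℕ), 1 ≤ k →
      steenrodPdual K q n k (f i) = -((1 + q * (i : K)) • f (i + k)))
    (h0 : f 0 ≠ 0)
    (ℓ : ℕ) (hℓ : f ℓ ≠ 0) (hmax : ∀ i, ℓ < i → f i = 0) :
    IsQHarmonic q (f ℓ) ∧
    (∀ i ≤ ℓ, 1 + q * (i : K) ≠ 0 → f i ≠ 0) := by
  constructor
  · intro k hk
    rw [hstr ℓ k hk, hmax (ℓ + k) (by omega)]
    simp
  · intro i hi hq hzero
    rcases eq_or_lt_of_le hi with rfl | hlt
    · exact hℓ hzero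
    · have h := hstr i (ℓ - i) (by omega)
      rw [hzero, map_zero] at h
      have : i + (ℓ - i) = ℓ := by omega
      rw [this] at h
      rcases smul_eq_zero.mp (neg_eq_zero.mp h.symm) with h' | h'
      · exact hq h'
      · exact hℓ h'
end

section
/- Let n ≥ 1 and let (f_i)_{i∈ℕ} be a family of polynomials in ℂ[x_1,…,x_n] satisfying the 0-harmonic string relations: for all i ≥ 0 and all k ≥ 1, Σ_{j=1}^n ∂^k f_i/∂x_j^k = −f_{i+k}. Then f_i = 0 for every i > n; that is, 0-harmonic strings on n variables have length at most n (equivalently, the corresponding classical-harmonic polynomial in the n+1 variables x_1,…,x_n,y has degree at most n in y). -/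
open MvPolynomial

/-!
The partial derivatives `∂_1, …, ∂_n` and the shift `S : (g_j) ↦ (g_{j+1})` are `n + 1` commuting
operators on sequences of polynomials, and the string relations say that every power sum
`∂_1^k + ⋯ + ∂_n^k + S^k` (`k ≥ 1`) kills `f`. In characteristic zero Newton's identities put
the elementary symmetric functions of these operators in the ideal spanned by the power sums, and
since `S` is a root of `∏ (T - x)` over the `n + 1` operators `x`, so is `S^(n+1)`.
Hence `f_{j+n+1} = 0` for all `j`.
-/

open Finset

section
variable {B σ : Type*} [CommRing B] [Algebra ℚ B] [Fintype σ]

theorem esymm_mem_of_sum_pow_mem (x : σ → B) {I : Ideal B}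
    (hp : ∀ k, 1 ≤ k → k ≤ Fintype.card σ → ∑ i, x i ^ k ∈ I) {k : ℕ} (hk1 : 1 ≤ k)
    (hk : k ≤ Fintype.card σ) : (univ.val.map x).esymm k ∈ I := by
  classical
  have hnewton := congr(aeval x $(mul_esymm_eq_sum σ ℚ k))
  simp only [map_mul, map_natCast, map_sum, map_pow, map_neg, map_one,
    aeval_esymm_eq_multiset_esymm, psum, aeval_X] at hnewton
  have hmul : (k : B) * (univ.val.map x).esymm k ∈ I := by
    rw [hnewton]
    refine I.mul_mem_left _ (I.sum_mem fun a ha => I.mul_mem_left _ (hp a.2 ?_ ?_))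
    all_goals simp only [mem_filter, HasAntidiagonal.mem_antidiagonal] at ha; omega
  have hunit : IsUnit (k : B) := by
    have hk0 : (k : ℚ) ≠ 0 := by exact_mod_cast (by omega : k ≠ 0)
    simpa using (IsUnit.mk0 _ hk0).map (algebraMap ℚ B)
  exact (I.unit_mul_mem_iff_mem hunit).mp hmul

theorem pow_card_mem_of_sum_pow_mem (x : σ → B) {I : Ideal B}
    (hp : ∀ k, 1 ≤ k → k ≤ Fintype.card σ → ∑ i, x i ^ k ∈ I) (i : σ) :
    x i ^ Fintype.card σ ∈ I := by
  classical
  have hvieta :=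
    congr(Polynomial.eval (x i) $(Multiset.prod_X_sub_X_eq_sum_esymm (univ.val.map x)))
  have hzero :
      ((univ.val.map x).map fun t => Polynomial.X - Polynomial.C t).prod.eval (x i) = 0 := by
    rw [Polynomial.eval_multiset_prod, Multiset.map_map, Multiset.map_map]
    exact Multiset.prod_eq_zero (Multiset.mem_map.mpr ⟨i, mem_univ_val i, by simp⟩)
  rw [hzero, Polynomial.eval_finsetSum, Multiset.card_map, card_val, sum_range_succ'] at hvieta
  simp only [Polynomial.eval_mul, Polynomial.eval_pow, Polynomial.eval_neg, Polynomial.eval_one,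
    Polynomial.eval_C, Polynomial.eval_X, card_univ, pow_zero, Nat.sub_zero, one_mul,
    show (univ.val.map x).esymm 0 = 1 by simp [Multiset.esymm]] at hvieta
  rw [eq_neg_of_add_eq_zero_right hvieta.symm, neg_mem_iff]
  exact I.sum_mem fun k hk => I.mul_mem_left _ (I.mul_mem_right _
    (esymm_mem_of_sum_pow_mem x hp (by omega) (by simp only [mem_range] at hk; omega)))

end

section
variable {R M : Type*} [Semiring R] [AddCommMonoid M] [Module R M]

theorem LinearMap.compLeft_pow_apply {I : Type*} (a : Module.End R M) (k : ℕ) (g : I → M) :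
    (a.compLeft I ^ k) g = fun j => (a ^ k) (g j) := by
  induction k generalizing g with
  | zero => rfl
  | succ k ih => rw [pow_succ, Module.End.mul_apply, ih]; rfl

theorem LinearMap.funLeft_add_one_pow_apply (k : ℕ) (g : ℕ → M) :
    (LinearMap.funLeft R M (· + 1) ^ k) g = fun j => g (j + k) := by
  induction k generalizing g with
  | zero => rfl
  | succ k ih => rw [pow_succ, Module.End.mul_apply, ih]; rfl
end

open scoped IsMulCommutative in
theorem eq_zero_of_card_lt_of_sum_pow_apply_eq_neg {K V ι : Type*} [Field K] [CharZero K]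
    [AddCommGroup V] [Module K V] [Fintype ι] (d : ι → Module.End K V)
    (hd : ∀ i j, Commute (d i) (d j)) (f : ℕ → V)
    (hf : ∀ j k, 1 ≤ k → (∑ i, d i ^ k) (f j) = -f (j + k))
    (j : ℕ) (hj : Fintype.card ι < j) : f j = 0 := by
  let x : Option ι → Module.End K (ℕ → V) := fun o =>
    o.elim (LinearMap.funLeft K V (· + 1)) fun i => (d i).compLeft ℕ
  have hx : ∀ o o', Commute (x o) (x o') := by
    rintro (_ | i) (_ | i')
    · rfl
    · rfl
    · rfl
    · exact LinearMap.ext fun g => funext fun l => congr($(hd i i') (g l))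
  let B := Algebra.adjoin K (Set.range x)
  have : IsMulCommutative B := Algebra.isMulCommutative_adjoin K
    (by rintro _ ⟨o, rfl⟩ _ ⟨o', rfl⟩; exact hx o o')
  let _ : Algebra ℚ B := ((algebraMap K B).comp (algebraMap ℚ K)).toAlgebra
  let y : Option ι → B := fun o => ⟨x o, Algebra.subset_adjoin ⟨o, rfl⟩⟩
  let I : Ideal B := LinearMap.ker (LinearMap.toSpanSingleton B _ f)
  have hI : ∀ b : B, b ∈ I ↔ (b : Module.End K (ℕ → V)) f = 0 := fun b => Iff.rfl
  have hshift : ∀ k g, (x none ^ k) g = fun l => g (l + k) :=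
    LinearMap.funLeft_add_one_pow_apply
  have hcomp : ∀ i k g, (x (some i) ^ k) g = fun l => (d i ^ k) (g l) :=
    fun i => LinearMap.compLeft_pow_apply (d i)
  have hpsum : ∀ k, 1 ≤ k → ∑ o, y o ^ k ∈ I := by
    intro k hk
    rw [hI, AddSubmonoidClass.coe_finsetSum, Fintype.sum_option, LinearMap.add_apply,
      LinearMap.sum_apply]
    simp only [SubmonoidClass.coe_pow, y, hshift, hcomp]
    funext l
    rw [Pi.add_apply, Finset.sum_apply, ← LinearMap.sum_apply, hf l k hk, Pi.zero_apply,
      add_neg_cancel]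
  have hshift_card := (hI _).mp (pow_card_mem_of_sum_pow_mem y (fun k hk _ => hpsum k hk) none)
  rw [SubmonoidClass.coe_pow, hshift, Fintype.card_option] at hshift_card
  simpa [Nat.sub_add_cancel hj] using congrFun hshift_card (j - (Fintype.card ι + 1))

theorem commute_pderiv {σ R : Type*} [CommRing R] (i j : σ) :
    Commute ((pderiv i).toLinearMap : Module.End R (MvPolynomial σ R))
      (pderiv j).toLinearMap := by
  classical
  have h : ⁅pderiv i, pderiv j⁆ = (0 : Derivation R (MvPolynomial σ R) (MvPolynomial σ R)) :=
    derivation_ext fun k => by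
      rw [Derivation.commutator_apply]
      simp [pderiv_X, Pi.single_apply, apply_ite]
  rw [commute_iff_lie_eq, ← Derivation.commutator_coe_linear_map, h]
  rfl

theorem steenrodPdual_zero (K : Type) [Field K] (n k : ℕ) :
    steenrodPdual K 0 n k = ∑ i : Fin n, (pderiv i).toLinearMap ^ k := by
  simp [steenrodPdual]

theorem zeroHarmonicString_length_le_general (n : ℕ)
    (f : ℕ → MvPolynomial (Fin n) ℂ)
    (hstr : ∀ (i k : ℕ), 1 ≤ k →
      steenrodPdual ℂ 0 n k (f i) = -(f (i + k))) :
    ∀ i, n < i → f i = 0 := by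
  intro i hi
  refine eq_zero_of_card_lt_of_sum_pow_apply_eq_neg (fun j : Fin n => (pderiv j).toLinearMap)
    commute_pderiv f (fun j k hk => ?_) i (by rwa [Fintype.card_fin])
  rw [← steenrodPdual_zero, hstr j k hk]

/-- A `0`-harmonic string on `n` variables, i.e. a family `(f_i)` in
`ℂ[x_1,…,x_n]` with `∑_j ∂^k f_i/∂x_j^k = −f_{i+k}` for all `i ≥ 0`, `k ≥ 1`, satisfies
`f_i = 0` for all `i > n`: such strings have length at most `n`. -/
theorem zeroHarmonicString_length_le (n : ℕ) (hn : 1 ≤ n)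
    (f : ℕ → MvPolynomial (Fin n) ℂ)
    (hstr : ∀ (i k : ℕ), 1 ≤ k →
      steenrodPdual ℂ 0 n k (f i) = -(f (i + k))) :
    ∀ i, n < i → f i = 0 :=
  zeroHarmonicString_length_le_general n f hstr
end

section
/- Let d ≥ 2 be an integer, let n ≥ 2, and set q_0 := −2/d ∈ ℂ. Then the polynomial p := (x_1 − x_2)(x_1 + x_2)^{d−1} ∈ ℂ[x_1,…,x_n] is a nonzero q_0-harmonic polynomial of degree d. In particular, when d > n(n−1)/2, there exists a q_0-harmonic polynomial in n variables of degree exceeding n(n−1)/2, the top degree of the classical harmonics. -/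
open MvPolynomial

lemma natAux (d k : ℕ) :
    (d-1).descFactorial k + k * (d-1).descFactorial (k-1) * (d-k)
      = (k+1) * (d-1).descFactorial k := by
  cases k with
  | zero => simp
  | succ j =>
    rw [Nat.descFactorial_succ]
    have h : d - (j+1) = d - 1 - j := by omega
    rw [h]
    simp only [Nat.add_sub_cancel]
    ring

lemma natAux2 (d k : ℕ) (hd : 1 ≤ d) :
    (d-1).descFactorial (k+1) + (k+1) * (d-1).descFactorial k
      = d * (d-1).descFactorial k := by
  rw [Nat.descFactorial_succ]
  rcases le_or_gt k (d-1) with h | h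
  · rw [← add_mul]
    congr 1
    omega
  · rw [Nat.descFactorial_of_lt h]
    simp

lemma key_deriv {n : ℕ} (i0 i1 i : Fin n) (d : ℕ) (c : ℂ)
    (hu : pderiv i ((X i0 + X i1 : MvPolynomial (Fin n) ℂ)) = 1)
    (hv : pderiv i ((X i0 - X i1 : MvPolynomial (Fin n) ℂ)) = C c) :
    ∀ k : ℕ, (((pderiv i).toLinearMap : Module.End ℂ (MvPolynomial (Fin n) ℂ)) ^ k)
        ((X i0 - X i1) * (X i0 + X i1) ^ (d-1))
      = (((d-1).descFactorial k : ℂ)) • ((X i0 - X i1) * (X i0 + X i1)^(d-1-k))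
        + (c * ((k * (d-1).descFactorial (k-1) : ℕ) : ℂ)) • (X i0 + X i1)^(d-k) := by
  intro k
  induction k with
  | zero => simp
  | succ k ih =>
    rw [pow_succ', Module.End.mul_apply, ih]
    set u : MvPolynomial (Fin n) ℂ := X i0 + X i1 with hudef
    set v : MvPolynomial (Fin n) ℂ := X i0 - X i1 with hvdef
    rw [map_add, map_smul, map_smul]
    rw [show ((pderiv i).toLinearMap : Module.End ℂ (MvPolynomial (Fin n) ℂ)) (v * u ^ (d-1-k))
        = pderiv i (v * u ^ (d-1-k)) from rfl]
    rw [show ((pderiv i).toLinearMap : Module.End ℂ (MvPolynomial (Fin n) ℂ)) (u ^ (d-k))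
        = pderiv i (u ^ (d-k)) from rfl]
    rw [pderiv_mul, pderiv_pow, pderiv_pow, hu, hv]
    have e1 : d - 1 - k - 1 = d - 1 - (k+1) := by omega
    have e2 : d - k - 1 = d - (k+1) := by omega
    have e3 : d - 1 - k = d - (k+1) := by omega
    rw [e1, e2, e3]
    have hc1 : ((d-1).descFactorial (k+1) : ℂ) = ((d-(k+1) : ℕ) : ℂ) * ((d-1).descFactorial k : ℂ) := by
      rw [Nat.descFactorial_succ, ← e3]; push_cast; ring
    have hc2 : (((k+1) * (d-1).descFactorial k : ℕ) : ℂ)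
        = ((d-1).descFactorial k : ℂ) + ((k * (d-1).descFactorial (k-1) : ℕ) : ℂ) * ((d-k : ℕ) : ℂ) := by
      have := natAux d k
      push_cast [← this]
      ring
    simp only [Nat.add_sub_cancel]
    rw [hc1, hc2]
    simp only [smul_eq_C_mul, map_mul, map_add, ← C_eq_coe_nat]
    push_cast
    ring

lemma coeff_u_pow {n : ℕ} (i0 i1 : Fin n) (h01 : i0 ≠ i1) :
    ∀ e : ℕ, coeff (Finsupp.single i0 e) ((X i0 + X i1 : MvPolynomial (Fin n) ℂ) ^ e) = 1 := by
  intro e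
  induction e with
  | zero => simp
  | succ e ih =>
    rw [pow_succ', add_mul]
    have h1 : Finsupp.single i0 (e+1) = Finsupp.single i0 1 + Finsupp.single i0 e := by
      rw [← Finsupp.single_add, add_comm]
    rw [coeff_add, h1, coeff_X_mul, ih, coeff_X_mul']
    have h2 : i1 ∉ (Finsupp.single i0 1 + Finsupp.single i0 e).support := by
      simp [Finsupp.mem_support_iff, Finsupp.single_apply, h01, h01.symm]
    simp [h2]

/-- For `d ≥ 2`, `n ≥ 2` and `q_0 = −2/d`, the polynomial
`(x_1 − x_2)(x_1 + x_2)^{d−1} ∈ ℂ[x_1,…,x_n]` is a nonzero `q_0`-harmonic polynomial of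
degree `d`; in particular, if `d > n(n−1)/2` there is a `q_0`-harmonic polynomial of
degree exceeding `n(n−1)/2`, the top degree of the classical harmonics. -/
theorem qHarmonic_high_degree_counterexample (d n : ℕ) (hd : 2 ≤ d) (hn : 2 ≤ n)
    (p : MvPolynomial (Fin n) ℂ)
    (hp : p = (X (⟨0, by omega⟩ : Fin n) - X (⟨1, by omega⟩ : Fin n)) *
        (X (⟨0, by omega⟩ : Fin n) + X (⟨1, by omega⟩ : Fin n)) ^ (d - 1)) :
    p ≠ 0 ∧ IsQHarmonic (-2 / (d : ℂ)) p ∧ p.totalDegree = d ∧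
    (n * (n - 1) / 2 < d →
      ∃ p' : MvPolynomial (Fin n) ℂ,
        IsQHarmonic (-2 / (d : ℂ)) p' ∧ n * (n - 1) / 2 < p'.totalDegree) := by
  have hd0 : (d:ℂ) ≠ 0 := Nat.cast_ne_zero.mpr (by omega)
  have h0n : 0 < n := by omega
  have h1n : 1 < n := by omega
  set i0 : Fin n := ⟨0, h0n⟩ with hi0
  set i1 : Fin n := ⟨1, h1n⟩ with hi1
  have h01 : i0 ≠ i1 := by
    simp [hi0, hi1, Fin.ext_iff]
  have hp' : p = (X i0 - X i1) * (X i0 + X i1) ^ (d - 1) := hp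
  set u : MvPolynomial (Fin n) ℂ := X i0 + X i1 with hudef
  set v : MvPolynomial (Fin n) ℂ := X i0 - X i1 with hvdef
  -- coefficient of x0^d is 1
  have hc : coeff (Finsupp.single i0 d) p = 1 := by
    rw [hp', hvdef, sub_mul]
    have h1 : Finsupp.single i0 d = Finsupp.single i0 1 + Finsupp.single i0 (d-1) := by
      rw [← Finsupp.single_add]; congr 1; omega
    rw [coeff_sub, h1, coeff_X_mul, coeff_u_pow i0 i1 h01, coeff_X_mul']
    have h2 : i1 ∉ (Finsupp.single i0 1 + Finsupp.single i0 (d-1)).support := by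
      simp [Finsupp.mem_support_iff, Finsupp.single_apply, h01, h01.symm]
    rw [if_neg h2]
    ring
  have hne : p ≠ 0 := by
    intro h
    rw [h] at hc
    simp at hc
  -- total degree
  have hdeg : p.totalDegree = d := by
    apply le_antisymm
    · rw [hp']
      refine (totalDegree_mul _ _).trans ?_
      have h1 : v.totalDegree ≤ 1 := by
        rw [hvdef, sub_eq_add_neg]
        refine (totalDegree_add _ _).trans ?_
        simp [totalDegree_neg, totalDegree_X]
      have h2 : (u ^ (d-1)).totalDegree ≤ (d-1) * 1 := by
        refine (totalDegree_pow _ _).trans ?_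
        gcongr
        rw [hudef]
        refine (totalDegree_add _ _).trans ?_
        simp [totalDegree_X]
      omega
    · have hmem : Finsupp.single i0 d ∈ p.support := by
        rw [mem_support_iff, hc]
        exact one_ne_zero
      have := le_totalDegree hmem
      simpa [Finsupp.sum_single_index] using this
  -- harmonicity
  have hharm : IsQHarmonic (-2 / (d : ℂ)) p := by
    intro k hk
    have hu0 : pderiv i0 u = 1 := by
      rw [hudef]; simp [pderiv_X_of_ne h01.symm]
    have hu1 : pderiv i1 u = 1 := by
      rw [hudef]; simp [pderiv_X_of_ne h01]
    have hv0 : pderiv i0 v = C 1 := by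
      rw [hvdef]; simp [pderiv_X_of_ne h01.symm]
    have hv1 : pderiv i1 v = C (-1) := by
      rw [hvdef]; simp [pderiv_X_of_ne h01]
    have key0 := key_deriv i0 i1 i0 d 1 hu0 hv0
    have key1 := key_deriv i0 i1 i1 d (-1) hu1 hv1
    rw [steenrodPdual, LinearMap.sum_apply]
    simp only [LinearMap.add_apply, LinearMap.smul_apply, LinearMap.comp_apply,
      LinearMap.mulLeft_apply]
    rw [← Finset.sum_subset (Finset.subset_univ ({i0, i1} : Finset (Fin n)))]
    swap
    · intro i _ hi
      simp only [Finset.mem_insert, Finset.mem_singleton, not_or] at hi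
      have hdu : pderiv i u = 0 := by
        rw [hudef, map_add, pderiv_X_of_ne (Ne.symm hi.1), pderiv_X_of_ne (Ne.symm hi.2),
          add_zero]
      have hdv : pderiv i v = 0 := by
        rw [hvdef, map_sub, pderiv_X_of_ne (Ne.symm hi.1), pderiv_X_of_ne (Ne.symm hi.2),
          sub_zero]
      have hdp : pderiv i p = 0 := by
        rw [hp', pderiv_mul, pderiv_pow, hdu, hdv]
        ring
      have hpow : ∀ m : ℕ, 1 ≤ m →
          (((pderiv i).toLinearMap : Module.End ℂ (MvPolynomial (Fin n) ℂ)) ^ m) p = 0 := by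
        intro m hm
        obtain ⟨j, rfl⟩ := Nat.exists_eq_add_of_le hm
        rw [add_comm, pow_succ, Module.End.mul_apply]
        rw [show ((pderiv i).toLinearMap : Module.End ℂ (MvPolynomial (Fin n) ℂ)) p
            = pderiv i p from rfl, hdp, map_zero]
      rw [hpow k hk, hpow (k+1) (by omega)]
      simp
    rw [Finset.sum_pair h01, hp', key0 k, key0 (k+1), key1 k, key1 (k+1)]
    simp only [Nat.add_sub_cancel]
    have e3 : d - (k+1) = d - 1 - k := by omega
    rw [e3]
    set q : ℂ := -2 / (d : ℂ) with hq
    set ck : ℂ := ((d-1).descFactorial k : ℂ) with hck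
    set ck1 : ℂ := ((d-1).descFactorial (k+1) : ℂ) with hck1
    set bk : ℂ := ((k * (d-1).descFactorial (k-1) : ℕ) : ℂ) with hbk
    set bk1 : ℂ := (((k+1) * (d-1).descFactorial k : ℕ) : ℂ) with hbk1
    have hsum : ck1 + bk1 = (d : ℂ) * ck := by
      rw [hck1, hbk1, hck]
      exact_mod_cast congrArg (fun x : ℕ => (x : ℂ)) (natAux2 d k (by omega))
    rcases le_or_gt (k+1) (d-1) with hcase | hcase
    · have hpow : u ^ (d-1-k) = u * u ^ (d-1-(k+1)) := by
        rw [← pow_succ']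
        congr 1
        omega
      have hz : 2 * ck + q * (ck1 + bk1) = 0 := by
        rw [hsum, hq]
        field_simp
        ring
      calc _ = (2 * ck + q * (ck1 + bk1)) • (v * (u * u ^ (d-1-(k+1)))) := by
              rw [hpow]
              simp only [smul_eq_C_mul, map_mul, map_add, map_one, map_neg, map_ofNat, hudef, hvdef]
              ring
        _ = 0 := by rw [hz, zero_smul]
    · have hck1z : ck1 = 0 := by
        rw [hck1, Nat.descFactorial_of_lt hcase]
        simp
      have hz : 2 * ck + q * bk1 = 0 := by
        have : q * bk1 = q * (ck1 + bk1) := by rw [hck1z]; ring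
        rw [this, hsum, hq]
        field_simp
        ring
      calc _ = (2 * ck + q * bk1) • (v * u ^ (d-1-k)) := by
              rw [hck1z]
              simp only [smul_eq_C_mul, map_mul, map_add, map_one, map_neg, map_ofNat, hudef, hvdef, map_zero]
              ring
        _ = 0 := by rw [hz, zero_smul]
  exact ⟨hne, hharm, hdeg, fun hlt => ⟨p, hharm, by omega⟩⟩
end
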